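/- arXiv:1805.07232 — 10 statements merged into one kernel-verified Lean document; each statement's English description precedes it below -/
import Mathlib

section
/- Let G be a finite connected graph with δ-thin triangles and let u,v be a pair of mutually distant vertices of G. If c is a middle vertex of any (u,v)-geodesic, then ecc_G(c) ≤ ⌈d_G(u,v)/2⌉ + δ ≤ rad(G) + δ. -/
/-!
Fix a target vertex `w`. The Gromov product at `u` or at `v` is large enough for `c` to be
compared, by δ-thinness, with the vertex `c'` at the same distance from that endpoint on a
geodesic to `w`. Since `ecc u = d(u,v)`, the vertex `c'` is at distance at most
`d(u,v) - d(u,c) = d(c,v)` from `w` (symmetrically at most `d(u,c)` from the `v` side), so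
`d(c,w) ≤ max (d(u,c), d(c,v)) + δ`, and this maximum is `⌈d(u,v)/2⌉` for a middle vertex. The
bound `⌈d(u,v)/2⌉ ≤ rad` is the triangle inequality `d(u,v) ≤ 2 ecc w`.
-/

open SimpleGraph

variable {V : Type*}

/-- Eccentricity of a vertex: the largest distance from `v` to any vertex. -/
noncomputable def ecc [Fintype V] (G : SimpleGraph V) (v : V) : ℕ :=
  Finset.univ.sup fun u => G.dist v u

/-- Radius: the minimum eccentricity. -/
noncomputable def rad [Fintype V] (G : SimpleGraph V) : ℕ :=
  sInf (Set.range (ecc G))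

/-- Diameter: the maximum eccentricity. -/
noncomputable def gdiam [Fintype V] (G : SimpleGraph V) : ℕ :=
  Finset.univ.sup fun v => ecc G v

/-- `G` has δ-thin triangles: for all vertices `x y z`, all geodesics `p1` from `x` to `y`
and `p2` from `x` to `z`, and all vertices `u ∈ p1`, `v ∈ p2` with
`d(x,u) = d(x,v) ≤ (y|z)_x`, one has `d(u,v) ≤ δ`.  The Gromov product condition
`d(x,u) ≤ (y|z)_x = (d(x,y) + d(x,z) - d(y,z))/2` is written additively in `ℕ`. -/
def ThinTriangles (G : SimpleGraph V) (δ : ℝ) : Prop :=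
  ∀ (x y z : V) (p1 : G.Walk x y) (p2 : G.Walk x z),
    p1.length = G.dist x y → p2.length = G.dist x z →
    ∀ u ∈ p1.support, ∀ v ∈ p2.support,
      G.dist x u = G.dist x v →
      2 * G.dist x u + G.dist y z ≤ G.dist x y + G.dist x z →
      (G.dist u v : ℝ) ≤ δ

namespace SimpleGraph.Walk

variable {G : SimpleGraph V} {a b c : V} {p : G.Walk a b}

lemma dist_add_dist_of_mem_support (hp : p.length = G.dist a b) (hc : c ∈ p.support) :
    G.dist a c + G.dist c b = G.dist a b := by
  classical
  rw [← length_eq_dist_of_subwalk hp (p.isSubwalk_takeUntil hc),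
    ← length_eq_dist_of_subwalk hp (p.isSubwalk_dropUntil hc), ← length_append, p.take_spec hc, hp]

lemma dist_getVert_of_length_eq_dist (hp : p.length = G.dist a b) {n : ℕ} (hn : n ≤ p.length) :
    G.dist a (p.getVert n) = n := by
  rw [← length_eq_dist_of_subwalk hp (p.isSubwalk_take n), take_length, min_eq_left hn]

end SimpleGraph.Walk

namespace SimpleGraph

variable [Fintype V] (G : SimpleGraph V)

lemma dist_le_ecc (v w : V) : G.dist v w ≤ ecc G v :=
  Finset.le_sup (f := fun w => G.dist v w) (Finset.mem_univ w)

lemma exists_dist_eq_ecc (v : V) : ∃ w, G.dist v w = ecc G v := by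
  obtain ⟨w, -, hw⟩ := Finset.exists_mem_eq_sup Finset.univ ⟨v, Finset.mem_univ v⟩
    (fun w => G.dist v w)
  exact ⟨w, hw.symm⟩

lemma le_rad [Nonempty V] {n : ℕ} (h : ∀ w, n ≤ ecc G w) : n ≤ rad G :=
  le_csInf (Set.range_nonempty _) (Set.forall_mem_range.2 h)

lemma dist_le_two_mul_ecc {G : SimpleGraph V} (hG : G.Connected) (u v w : V) :
    G.dist u v ≤ 2 * ecc G w := by
  have : G.dist u v ≤ G.dist u w + G.dist w v := hG.dist_triangle
  have : G.dist u w = G.dist w u := G.dist_comm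
  have := G.dist_le_ecc w u
  have := G.dist_le_ecc w v
  omega

end SimpleGraph

namespace ThinTriangles

variable {G : SimpleGraph V} {δ : ℝ} {u v c : V} {P : G.Walk u v}

lemma dist_add_dist_le_of_two_mul_le (hthin : ThinTriangles G δ) (hG : G.Connected)
    (hP : P.length = G.dist u v) (hc : c ∈ P.support) {w : V}
    (hw : 2 * G.dist u c + G.dist v w ≤ G.dist u v + G.dist u w) :
    (G.dist c w : ℝ) + G.dist u c ≤ G.dist u w + δ := by
  obtain ⟨Q, hQ⟩ := hG.exists_walk_length_eq_dist u w
  have hcw : G.dist u c ≤ Q.length := by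
    have : G.dist u v ≤ G.dist u w + G.dist w v := hG.dist_triangle
    have : G.dist w v = G.dist v w := G.dist_comm
    omega
  obtain ⟨c', hc'Q, hc'⟩ : ∃ c' ∈ Q.support, G.dist u c' = G.dist u c :=
    ⟨_, Q.getVert_mem_support _, Q.dist_getVert_of_length_eq_dist hQ hcw⟩
  have hclose : (G.dist c c' : ℝ) ≤ δ := hthin u v w P Q hP hQ c hc c' hc'Q hc'.symm hw
  have hrest := Q.dist_add_dist_of_mem_support hQ hc'Q
  have htri : G.dist c w ≤ G.dist c c' + G.dist c' w := hG.dist_triangle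
  have : (G.dist c w : ℝ) + G.dist u c ≤ G.dist c c' + G.dist u w := by
    exact_mod_cast by omega
  linarith

lemma dist_le_max_of_mutuallyDistant [Fintype V] (hthin : ThinTriangles G δ) (hG : G.Connected)
    (hu : G.dist u v = ecc G u) (hv : G.dist u v = ecc G v)
    (hP : P.length = G.dist u v) (hc : c ∈ P.support) (w : V) :
    (G.dist c w : ℝ) ≤ (max (G.dist u c) (G.dist c v) : ℕ) + δ := by
  have hsplit := P.dist_add_dist_of_mem_support hP hc
  have huw := G.dist_le_ecc u w
  have hvw := G.dist_le_ecc v w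
  have hvu : G.dist v u = G.dist u v := G.dist_comm
  have hvc : G.dist v c = G.dist c v := G.dist_comm
  rcases le_total (2 * G.dist u c + G.dist v w) (G.dist u v + G.dist u w) with hw | hw
  · have := hthin.dist_add_dist_le_of_two_mul_le hG hP hc hw
    have : (G.dist u w : ℝ) ≤ G.dist u c + (max (G.dist u c) (G.dist c v) : ℕ) := by
      exact_mod_cast by omega
    linarith
  · have hPr : P.reverse.length = G.dist v u := by rw [Walk.length_reverse, hP, hvu]
    have hcr : c ∈ P.reverse.support := by simpa using hc
    have := hthin.dist_add_dist_le_of_two_mul_le hG hPr hcr (w := w) (by omega)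
    have : (G.dist v w : ℝ) ≤ G.dist v c + (max (G.dist u c) (G.dist c v) : ℕ) := by
      exact_mod_cast by omega
    linarith

end ThinTriangles

theorem stmt_1_general [Fintype V] (G : SimpleGraph V) (hG : G.Connected)
    (δ : ℝ) (hthin : ThinTriangles G δ)
    (u v : V) (hu : G.dist u v = ecc G u) (hv : G.dist u v = ecc G v)
    (P : G.Walk u v) (hP : P.length = G.dist u v)
    (c : V) (hcP : c ∈ P.support)
    (hmid : |(G.dist u c : ℝ) - (G.dist u v : ℝ) / 2| ≤ 1 / 2) :
    (ecc G c : ℝ) ≤ (↑((G.dist u v + 1) / 2) : ℝ) + δ ∧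
    (↑((G.dist u v + 1) / 2) : ℝ) + δ ≤ (rad G : ℝ) + δ := by
  have hsplit := P.dist_add_dist_of_mem_support hP hcP
  have hmid' : G.dist u v ≤ 2 * G.dist u c + 1 ∧ 2 * G.dist u c ≤ G.dist u v + 1 := by
    obtain ⟨h₁, h₂⟩ := abs_le.1 hmid
    rify
    constructor <;> linarith
  have hmax : max (G.dist u c) (G.dist c v) ≤ (G.dist u v + 1) / 2 := max_le (by omega) (by omega)
  refine ⟨?_, ?_⟩
  · obtain ⟨w, hw⟩ := G.exists_dist_eq_ecc c
    rw [← hw]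
    calc (G.dist c w : ℝ) ≤ (max (G.dist u c) (G.dist c v) : ℕ) + δ :=
          hthin.dist_le_max_of_mutuallyDistant hG hu hv hP hcP w
      _ ≤ _ := by gcongr
  · have : Nonempty V := ⟨u⟩
    have := G.le_rad (n := (G.dist u v + 1) / 2) fun w => by
      have := dist_le_two_mul_ecc hG u v w
      omega
    gcongr

/-- If `u, v` are mutually distant and `c` is a middle vertex of a
`(u,v)`-geodesic, then `ecc(c) ≤ ⌈d(u,v)/2⌉ + δ ≤ rad(G) + δ`. -/
theorem stmt_1 [Fintype V] (G : SimpleGraph V) (hG : G.Connected)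
    (δ : ℝ) (hδ : 0 ≤ δ) (hthin : ThinTriangles G δ)
    (u v : V) (hu : G.dist u v = ecc G u) (hv : G.dist u v = ecc G v)
    (P : G.Walk u v) (hP : P.length = G.dist u v)
    (c : V) (hcP : c ∈ P.support)
    (hmid : |(G.dist u c : ℝ) - (G.dist u v : ℝ) / 2| ≤ 1 / 2) :
    (ecc G c : ℝ) ≤ (↑((G.dist u v + 1) / 2) : ℝ) + δ ∧
    (↑((G.dist u v + 1) / 2) : ℝ) + δ ≤ (rad G : ℝ) + δ :=
  stmt_1_general G hG δ hthin u v hu hv P hP c hcP hmid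
end

section
/- Let G be a finite connected graph with δ-thin triangles, let u,v be a pair of mutually distant vertices of G, and let c be a middle vertex of any (u,v)-geodesic. Then for every integer k ≥ 0 and every vertex x with ecc_G(x) = rad(G) + k, one has k − δ ≤ d_G(x,c) ≤ k + 2δ + 1. In particular, C(G) ⊆ B(c, 2δ+1). -/
open SimpleGraph

variable {V : Type*}

lemma split_walk {G : SimpleGraph V} {a b : V} (p : G.Walk a b) (i : ℕ) (hi : i ≤ p.length) :
    ∃ (w : V) (q : G.Walk a w) (r : G.Walk w b),
      w ∈ p.support ∧ q.length = i ∧ q.length + r.length = p.length := by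
  induction p generalizing i with
  | nil =>
    refine ⟨_, .nil, .nil, by simp, ?_, by simp⟩
    simp only [Walk.length_nil, Nat.le_zero] at hi
    simp [hi]
  | cons h p ih =>
    cases i with
    | zero => exact ⟨_, .nil, .cons h p, by simp, rfl, by simp⟩
    | succ j =>
      obtain ⟨w, q, r, hw, hq, hqr⟩ := ih j (by simpa using hi)
      refine ⟨w, .cons h q, r, by simp [hw], by simp [hq], ?_⟩
      simp only [Walk.length_cons]; omega

lemma geodesic_point {G : SimpleGraph V} (hG : G.Connected) {a b : V} (p : G.Walk a b)
    (hp : p.length = G.dist a b) (i : ℕ) (hi : i ≤ p.length) :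
    ∃ w ∈ p.support, G.dist a w = i ∧ G.dist w b + i = G.dist a b := by
  obtain ⟨w, q, r, hw, hq, hqr⟩ := split_walk p i hi
  have h1 : G.dist a w ≤ i := hq ▸ SimpleGraph.dist_le q
  have h2 : G.dist w b ≤ r.length := SimpleGraph.dist_le r
  have h3 : G.dist a b ≤ G.dist a w + G.dist w b := hG.dist_triangle
  exact ⟨w, hw, by omega, by omega⟩

lemma geodesic_mem_dist {G : SimpleGraph V} (hG : G.Connected) {a b w : V} (p : G.Walk a b)
    (hp : p.length = G.dist a b) (hw : w ∈ p.support) :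
    G.dist a w + G.dist w b = G.dist a b := by
  classical
  have hlen : (p.takeUntil w hw).length + (p.dropUntil w hw).length = p.length := by
    rw [← Walk.length_append, p.take_spec hw]
  have h1 := SimpleGraph.dist_le (p.takeUntil w hw)
  have h2 := SimpleGraph.dist_le (p.dropUntil w hw)
  have h3 : G.dist a b ≤ G.dist a w + G.dist w b := hG.dist_triangle
  omega

/-- If `u, v` are mutually distant and `c` is a middle vertex of a
`(u,v)`-geodesic, then for every `k ≥ 0` and every `x` with `ecc(x) = rad(G) + k`,
`k - δ ≤ d(x,c) ≤ k + 2δ + 1`; in particular `C(G) ⊆ B(c, 2δ+1)`. -/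
theorem stmt_3 [Fintype V] (G : SimpleGraph V) (hG : G.Connected)
    (δ : ℝ) (hδ : 0 ≤ δ) (hthin : ThinTriangles G δ)
    (u v : V) (hu : G.dist u v = ecc G u) (hv : G.dist u v = ecc G v)
    (P : G.Walk u v) (hP : P.length = G.dist u v)
    (c : V) (hcP : c ∈ P.support)
    (hmid : |(G.dist u c : ℝ) - (G.dist u v : ℝ) / 2| ≤ 1 / 2) :
    (∀ (k : ℕ) (x : V), ecc G x = rad G + k →
      (k : ℝ) - δ ≤ (G.dist x c : ℝ) ∧ (G.dist x c : ℝ) ≤ (k : ℝ) + 2 * δ + 1) ∧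
    (∀ x : V, ecc G x = rad G → (G.dist x c : ℝ) ≤ 2 * δ + 1) := by
  have hne : Nonempty V := hG.nonempty
  set D := G.dist u v with hD
  set t := G.dist u c with ht
  set s := G.dist c v with hs
  have hts : t + s = D := geodesic_mem_dist hG P hP hcP
  -- middle vertex arithmetic
  have hmid1 : 2 * t ≤ D + 1 ∧ D ≤ 2 * t + 1 := by
    rw [abs_le] at hmid
    constructor
    · have : (2 * t : ℝ) ≤ (D : ℝ) + 1 := by push_cast; linarith [hmid.2]
      exact_mod_cast this
    · have : (D : ℝ) ≤ (2 * t : ℝ) + 1 := by push_cast; linarith [hmid.1]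
      exact_mod_cast this
  -- basic eccentricity facts
  have eccle : ∀ x w : V, G.dist x w ≤ ecc G x := fun x w =>
    Finset.le_sup (f := fun w => G.dist x w) (Finset.mem_univ w)
  have eccwit : ∀ x : V, ∃ w : V, ecc G x = G.dist x w := by
    intro x
    obtain ⟨w, -, hw⟩ := Finset.exists_mem_eq_sup Finset.univ Finset.univ_nonempty
      (fun w => G.dist x w)
    exact ⟨w, hw⟩
  -- KEY inequality
  have key : ∀ x : V,
      (G.dist x c : ℝ) + ((min t s : ℕ) : ℝ) ≤ δ + ((max (G.dist u x) (G.dist v x) : ℕ) : ℝ) := by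
    intro x
    obtain ⟨p2, hp2⟩ := hG.exists_walk_length_eq_dist u x
    obtain ⟨p3, hp3⟩ := hG.exists_walk_length_eq_dist v x
    have htri : D ≤ G.dist u x + G.dist x v := hG.dist_triangle
    have hxv : G.dist x v = G.dist v x := SimpleGraph.dist_comm ..
    by_cases hcase : 2 * t + G.dist v x ≤ D + G.dist u x
    · -- apex u
      have htle : t ≤ p2.length := by rw [hp2]; omega
      obtain ⟨c', hc'mem, hc'd, hc'd2⟩ := geodesic_point hG p2 hp2 t htle
      have hthin1 : (G.dist c c' : ℝ) ≤ δ :=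
        hthin u v x P p2 hP hp2 c hcP c' hc'mem (by rw [hc'd]) hcase
      have htriN : G.dist x c ≤ G.dist x c' + G.dist c' c := hG.dist_triangle
      have hxc' : G.dist x c' = G.dist c' x := SimpleGraph.dist_comm ..
      have hc'c : G.dist c' c = G.dist c c' := SimpleGraph.dist_comm ..
      have hN : G.dist x c + min t s ≤ G.dist u x + G.dist c c' := by omega
      have hNR : (G.dist x c : ℝ) + ((min t s : ℕ) : ℝ) ≤
          (G.dist u x : ℝ) + (G.dist c c' : ℝ) := by exact_mod_cast hN
      have hmaxR : (G.dist u x : ℝ) ≤ ((max (G.dist u x) (G.dist v x) : ℕ) : ℝ) := by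
        exact_mod_cast le_max_left _ _
      linarith
    · -- apex v
      push_neg at hcase
      have hvc : G.dist v c = s := SimpleGraph.dist_comm ..
      have hcmem' : c ∈ P.reverse.support := by
        rw [Walk.support_reverse]; exact List.mem_reverse.mpr hcP
      have hPrev : P.reverse.length = G.dist v u := by
        rw [Walk.length_reverse, hP, SimpleGraph.dist_comm]
      have hvu : G.dist v u = D := SimpleGraph.dist_comm ..
      have hsle : s ≤ p3.length := by rw [hp3]; omega
      obtain ⟨c'', hc''mem, hc''d, hc''d2⟩ := geodesic_point hG p3 hp3 s hsle
      have hcond : 2 * G.dist v c + G.dist u x ≤ G.dist v u + G.dist v x := by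
        rw [hvc, hvu]; omega
      have hthin1 : (G.dist c c'' : ℝ) ≤ δ :=
        hthin v u x P.reverse p3 hPrev hp3 c hcmem' c'' hc''mem (by rw [hc''d, hvc]) hcond
      have htriN : G.dist x c ≤ G.dist x c'' + G.dist c'' c := hG.dist_triangle
      have hxc'' : G.dist x c'' = G.dist c'' x := SimpleGraph.dist_comm ..
      have hc''c : G.dist c'' c = G.dist c c'' := SimpleGraph.dist_comm ..
      have hN : G.dist x c + min t s ≤ G.dist v x + G.dist c c'' := by omega
      have hNR : (G.dist x c : ℝ) + ((min t s : ℕ) : ℝ) ≤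
          (G.dist v x : ℝ) + (G.dist c c'' : ℝ) := by exact_mod_cast hN
      have hmaxR : (G.dist v x : ℝ) ≤ ((max (G.dist u x) (G.dist v x) : ℕ) : ℝ) := by
        exact_mod_cast le_max_right _ _
      linarith
  -- radius facts
  have hradlec : rad G ≤ ecc G c := Nat.sInf_le ⟨c, rfl⟩
  obtain ⟨w0, hw0⟩ : ∃ w0, ecc G w0 = rad G := by
    have : rad G ∈ Set.range (ecc G) := Nat.sInf_mem (Set.range_nonempty _)
    exact this
  have h2rad : D ≤ 2 * rad G := by
    have h1 : G.dist u w0 ≤ ecc G w0 := SimpleGraph.dist_comm (G := G) (u := u) (v := w0) ▸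
      eccle w0 u
    have h2 : G.dist w0 v ≤ ecc G w0 := eccle w0 v
    have h3 : D ≤ G.dist u w0 + G.dist w0 v := hG.dist_triangle
    omega
  -- ecc G c ≤ δ + max t s
  have heccc : (ecc G c : ℝ) ≤ δ + ((max t s : ℕ) : ℝ) := by
    obtain ⟨w1, hw1⟩ := eccwit c
    have hk := key w1
    have hcw : G.dist c w1 = G.dist w1 c := SimpleGraph.dist_comm ..
    have hub : max (G.dist u w1) (G.dist v w1) ≤ D := by
      have h1 : G.dist u w1 ≤ ecc G u := eccle u w1
      have h2 : G.dist v w1 ≤ ecc G v := eccle v w1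
      omega
    have hubR : ((max (G.dist u w1) (G.dist v w1) : ℕ) : ℝ) ≤ (D : ℝ) := by exact_mod_cast hub
    have hmm : min t s + max t s = D := by omega
    have hmmR : ((min t s : ℕ) : ℝ) + ((max t s : ℕ) : ℝ) = (D : ℝ) := by exact_mod_cast hmm
    rw [hw1, hcw]
    linarith
  have hmaxrad : max t s ≤ rad G := by
    have h1 : 2 * max t s ≤ D + 1 := by omega
    omega
  -- (rad : ℝ) - δ - 1 ≤ min t s
  have hminlow : (rad G : ℝ) - δ - 1 ≤ ((min t s : ℕ) : ℝ) := by
    have h1 : (rad G : ℝ) ≤ (ecc G c : ℝ) := by exact_mod_cast hradlec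
    have h2 : (2 * max t s : ℕ) ≤ D + 1 := by omega
    have h2R : 2 * ((max t s : ℕ) : ℝ) ≤ (D : ℝ) + 1 := by exact_mod_cast h2
    have h3 : (D : ℕ) ≤ 2 * min t s + 1 := by omega
    have h3R : (D : ℝ) ≤ 2 * ((min t s : ℕ) : ℝ) + 1 := by exact_mod_cast h3
    linarith
  have main : ∀ (k : ℕ) (x : V), ecc G x = rad G + k →
      (k : ℝ) - δ ≤ (G.dist x c : ℝ) ∧ (G.dist x c : ℝ) ≤ (k : ℝ) + 2 * δ + 1 := by
    intro k x hx
    constructor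
    · -- lower bound
      obtain ⟨w, hw⟩ := eccwit x
      have h1 : G.dist x w ≤ G.dist x c + G.dist c w := hG.dist_triangle
      have h2 : G.dist c w ≤ ecc G c := eccle c w
      have h3 : ecc G x ≤ G.dist x c + ecc G c := by omega
      have h3R : (ecc G x : ℝ) ≤ (G.dist x c : ℝ) + (ecc G c : ℝ) := by exact_mod_cast h3
      have hxR : (ecc G x : ℝ) = (rad G : ℝ) + (k : ℝ) := by exact_mod_cast hx
      have hmr : ((max t s : ℕ) : ℝ) ≤ (rad G : ℝ) := by exact_mod_cast hmaxrad
      linarith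
    · -- upper bound
      have hk := key x
      have hub : max (G.dist u x) (G.dist v x) ≤ ecc G x := by
        have h1 : G.dist u x = G.dist x u := SimpleGraph.dist_comm ..
        have h2 : G.dist v x = G.dist x v := SimpleGraph.dist_comm ..
        have h3 : G.dist x u ≤ ecc G x := eccle x u
        have h4 : G.dist x v ≤ ecc G x := eccle x v
        omega
      have hubR : ((max (G.dist u x) (G.dist v x) : ℕ) : ℝ) ≤ (ecc G x : ℝ) := by
        exact_mod_cast hub
      have hxR : (ecc G x : ℝ) = (rad G : ℝ) + (k : ℝ) := by exact_mod_cast hx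
      linarith
  refine ⟨main, fun x hx => ?_⟩
  have := (main 0 x (by omega)).2
  simpa using this
end

section
/- Let G be a finite connected graph with δ-thin triangles, let u be any vertex and let v ∈ F(u) be a vertex most distant from u. If w is a vertex of a (u,v)-geodesic at distance rad(G) from v, then ecc_G(w) ≤ rad(G) + δ. -/
open SimpleGraph
variable {V : Type*}

/-- On a shortest walk, any intermediate vertex splits the distance. -/
lemma dist_add_of_mem_geodesic {G : SimpleGraph V} (hG : G.Connected) {a b : V}
    (p : G.Walk a b) (hp : p.length = G.dist a b) {y : V} (hy : y ∈ p.support) :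
    G.dist a y + G.dist y b = G.dist a b := by
  classical
  have h1 : G.dist a y ≤ (p.takeUntil y hy).length := SimpleGraph.dist_le _
  have h2 : G.dist y b ≤ (p.dropUntil y hy).length := SimpleGraph.dist_le _
  have h3 : (p.takeUntil y hy).length + (p.dropUntil y hy).length = p.length := by
    have := congr_arg SimpleGraph.Walk.length (p.take_spec hy)
    rwa [SimpleGraph.Walk.length_append] at this
  have h4 : G.dist a b ≤ G.dist a y + G.dist y b := hG.dist_triangle
  omega

/-- On a shortest walk, there is a vertex at each prescribed distance from the start. -/
lemma exists_on_geodesic {G : SimpleGraph V} (hG : G.Connected) : ∀ {a b : V}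
    (p : G.Walk a b), p.length = G.dist a b → ∀ i ≤ p.length,
    ∃ y ∈ p.support, G.dist a y = i ∧ G.dist y b + i = p.length := by
  classical
  intro a b p
  induction p with
  | nil =>
    intro hp i hi
    rename_i z
    simp at hi
    subst hi
    exact ⟨z, by simp, by simp, by simp⟩
  | @cons a c b hadj q ih =>
    intro hp i hi
    rcases Nat.eq_zero_or_pos i with rfl | hipos
    · exact ⟨a, by simp, by simp, by simp [hp.symm]⟩
    · have hq : q.length = G.dist c b := by
        have h1 : G.dist c b ≤ q.length := SimpleGraph.dist_le _
        have h2 : G.dist a b ≤ 1 + G.dist c b := by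
          calc G.dist a b ≤ G.dist a c + G.dist c b := hG.dist_triangle
            _ ≤ 1 + G.dist c b := by
              have : G.dist a c ≤ 1 := SimpleGraph.dist_le (SimpleGraph.Walk.cons hadj SimpleGraph.Walk.nil)
              omega
        have h3 : (SimpleGraph.Walk.cons hadj q).length = q.length + 1 := by simp
        omega
      obtain ⟨j, rfl⟩ : ∃ j, i = j + 1 := ⟨i - 1, by omega⟩
      have hj : j ≤ q.length := by simp at hi; omega
      obtain ⟨y, hy, hdy, hyb⟩ := ih hq j hj
      refine ⟨y, by simp [hy], ?_, ?_⟩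
      · have h1 : G.dist a y ≤ j + 1 := by
          calc G.dist a y ≤ G.dist a c + G.dist c y := hG.dist_triangle
            _ ≤ 1 + j := by
              have : G.dist a c ≤ 1 := SimpleGraph.dist_le (SimpleGraph.Walk.cons hadj SimpleGraph.Walk.nil)
              omega
            _ = j + 1 := by omega
        have h2 : G.dist a b ≤ G.dist a y + G.dist y b := hG.dist_triangle
        have h3 : (SimpleGraph.Walk.cons hadj q).length = q.length + 1 := by simp
        omega
      · simp; omega

/-- If `v ∈ F(u)` and `w` is a vertex of a `(u,v)`-geodesic at
distance `rad(G)` from `v`, then `ecc(w) ≤ rad(G) + δ`. -/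
theorem stmt_5 [Fintype V] (G : SimpleGraph V) (hG : G.Connected)
    (δ : ℝ) (hδ : 0 ≤ δ) (hthin : ThinTriangles G δ)
    (u v : V) (hv : G.dist u v = ecc G u)
    (P : G.Walk u v) (hP : P.length = G.dist u v)
    (w : V) (hwP : w ∈ P.support) (hw : G.dist v w = rad G) :
    (ecc G w : ℝ) ≤ (rad G : ℝ) + δ := by
  classical
  have hne : Nonempty V := ⟨u⟩
  obtain ⟨c, hc⟩ : ∃ c, ecc G c = rad G := Nat.sInf_mem (Set.range_nonempty (ecc G))
  have hdist_le_ecc : ∀ a b : V, G.dist a b ≤ ecc G a := fun a b =>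
    Finset.le_sup (Finset.mem_univ b)
  have hdiam : ∀ a b : V, G.dist a b ≤ 2 * rad G := by
    intro a b
    have h1 : G.dist a b ≤ G.dist a c + G.dist c b := hG.dist_triangle
    have h2 : G.dist a c = G.dist c a := G.dist_comm (u := a) (v := c)
    have h3 := hdist_le_ecc c a
    have h4 := hdist_le_ecc c b
    omega
  -- split the geodesic at w
  have hsplit : G.dist u w + G.dist w v = G.dist u v := dist_add_of_mem_geodesic hG P hP hwP
  have hwv : G.dist w v = rad G := (G.dist_comm (u := w) (v := v)).trans hw
  -- pick x realizing the eccentricity of w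
  obtain ⟨x, -, hx⟩ := Finset.exists_mem_eq_sup Finset.univ Finset.univ_nonempty
    (fun x => G.dist w x)
  have hx : ecc G w = G.dist w x := hx
  rw [hx]
  have hux : G.dist u x ≤ G.dist u v := hv ▸ hdist_le_ecc u x
  have htri1 : G.dist u v ≤ G.dist u x + G.dist x v := hG.dist_triangle
  have hxv : G.dist x v = G.dist v x := G.dist_comm (u := x) (v := v)
  by_cases hcase : G.dist u v + G.dist v x ≤ 2 * rad G + G.dist u x
  · -- apex u : use P and a geodesic from u to x
    obtain ⟨Q, hQ⟩ := (hG.preconnected u x).exists_walk_length_eq_dist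
    have hsle : G.dist u w ≤ Q.length := by omega
    obtain ⟨y, hyQ, hdy, hyb⟩ := exists_on_geodesic hG Q hQ (G.dist u w) hsle
    have hδwy := hthin u v x P Q hP hQ w hwP y hyQ hdy.symm (by omega)
    have htri2 : G.dist w x ≤ G.dist w y + G.dist y x := hG.dist_triangle
    have hyx : G.dist y x ≤ rad G := by omega
    have h1 : (G.dist w x : ℝ) ≤ (G.dist w y : ℝ) + (G.dist y x : ℝ) := by exact_mod_cast htri2
    have h2 : (G.dist y x : ℝ) ≤ (rad G : ℝ) := by exact_mod_cast hyx
    linarith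
  · -- apex v : use P.reverse and a geodesic from v to x
    have hRvx : rad G ≤ G.dist v x := by omega
    obtain ⟨Q, hQ⟩ := (hG.preconnected v x).exists_walk_length_eq_dist
    have hsle : rad G ≤ Q.length := by omega
    obtain ⟨y, hyQ, hdy, hyb⟩ := exists_on_geodesic hG Q hQ (rad G) hsle
    have hPrev : P.reverse.length = G.dist v u := by
      rw [SimpleGraph.Walk.length_reverse, hP, G.dist_comm]
    have hwrev : w ∈ P.reverse.support := by
      rw [SimpleGraph.Walk.support_reverse]; exact List.mem_reverse.mpr hwP
    have hvu : G.dist v u = G.dist u v := G.dist_comm (u := v) (v := u)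
    have hδwy := hthin v u x P.reverse Q hPrev hQ w hwrev y hyQ (hw.trans hdy.symm)
      (by omega)
    have htri2 : G.dist w x ≤ G.dist w y + G.dist y x := hG.dist_triangle
    have hd2R := hdiam v x
    have hyx : G.dist y x ≤ rad G := by omega
    have h1 : (G.dist w x : ℝ) ≤ (G.dist w y : ℝ) + (G.dist y x : ℝ) := by exact_mod_cast htri2
    have h2 : (G.dist y x : ℝ) ≤ (rad G : ℝ) := by exact_mod_cast hyx
    linarith
end

section
/- Let G be a finite connected graph with δ-thin triangles, let u be any vertex and let v ∈ F(u) be a vertex most distant from u. Then for every pair of vertices x,y of G, max{d_G(v,x), d_G(v,y)} ≥ d_G(x,y) − 2δ. -/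
open SimpleGraph

variable {V : Type*}

/-- Splitting a walk at its `i`-th vertex. -/
lemma walk_split_aux {G : SimpleGraph V} {x y : V} (p : G.Walk x y) :
    ∀ i, i ≤ p.length → ∃ (q : G.Walk x (p.getVert i)) (r : G.Walk (p.getVert i) y),
      q.length = i ∧ r.length + i = p.length := by
  induction p with
  | nil =>
    intro i hi
    simp only [Walk.length_nil, Nat.le_zero] at hi
    subst hi
    exact ⟨Walk.nil.copy rfl (Walk.getVert_zero _).symm,
      Walk.nil.copy (Walk.getVert_zero _).symm rfl, by simp, by simp⟩
  | cons h q ih =>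
    intro i hi
    cases i with
    | zero =>
      exact ⟨Walk.nil.copy rfl (Walk.getVert_zero _).symm,
        (Walk.cons h q).copy (Walk.getVert_zero _).symm rfl, by simp, by simp⟩
    | succ n =>
      obtain ⟨q1, r1, hq1, hr1⟩ := ih n (by simpa using hi)
      rw [Walk.getVert_cons_succ]
      exact ⟨Walk.cons h q1, r1, by simp [hq1], by simp; omega⟩

/-- The `i`-th vertex of a geodesic is at distance `i` from the start and
`length - i` from the end. -/
lemma geo_point_aux {G : SimpleGraph V} (hG : G.Connected) {x y : V} (p : G.Walk x y)
    (hp : p.length = G.dist x y) {i : ℕ} (hi : i ≤ p.length) :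
    p.getVert i ∈ p.support ∧ G.dist x (p.getVert i) = i ∧
      i + G.dist (p.getVert i) y = G.dist x y := by
  obtain ⟨q, r, hq, hr⟩ := walk_split_aux p i hi
  have h1 : G.dist x (p.getVert i) ≤ i := by have := dist_le q; omega
  have h2 : G.dist (p.getVert i) y ≤ p.length - i := by
    have := dist_le r; omega
  have h3 : G.dist x y ≤ G.dist x (p.getVert i) + G.dist (p.getVert i) y :=
    hG.dist_triangle
  have hm : p.getVert i ∈ p.support :=
    Walk.mem_support_iff_exists_getVert.mpr ⟨i, rfl, hi⟩
  exact ⟨hm, by omega, by omega⟩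

/-- Chain bound: connecting `x` to `y` through points at level `t` on geodesics
from `u` to `x`, `v`, `y`. -/
lemma chain_bound_aux {G : SimpleGraph V} (hG : G.Connected) {δ : ℝ}
    (hthin : ThinTriangles G δ) (u x y v : V) (t : ℕ)
    (h1 : 2 * t + G.dist x v ≤ G.dist u x + G.dist u v)
    (h2 : 2 * t + G.dist y v ≤ G.dist u y + G.dist u v) :
    G.dist x y + 2 * t ≤ G.dist u x + G.dist u y + 2 * ⌊δ⌋₊ := by
  obtain ⟨px, hpx⟩ := hG.exists_walk_length_eq_dist u x
  obtain ⟨pv, hpv⟩ := hG.exists_walk_length_eq_dist u v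
  obtain ⟨py, hpy⟩ := hG.exists_walk_length_eq_dist u y
  have trx : G.dist u v ≤ G.dist u x + G.dist x v := hG.dist_triangle
  have trY : G.dist u v ≤ G.dist u y + G.dist y v := hG.dist_triangle
  have trv : G.dist u x ≤ G.dist u v + G.dist x v := by
    have h' := hG.dist_triangle (u := u) (v := v) (w := x)
    have h'' : G.dist v x = G.dist x v := SimpleGraph.dist_comm ..
    omega
  have htx : t ≤ px.length := by omega
  have htv : t ≤ pv.length := by omega
  have hty : t ≤ py.length := by omega
  obtain ⟨hma, ha1, ha2⟩ := geo_point_aux hG px hpx htx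
  obtain ⟨hmb, hb1, hb2⟩ := geo_point_aux hG pv hpv htv
  obtain ⟨hmc, hc1, hc2⟩ := geo_point_aux hG py hpy hty
  set a := px.getVert t
  set b := pv.getVert t
  set c := py.getVert t
  have dab : G.dist a b ≤ ⌊δ⌋₊ := by
    refine Nat.le_floor (hthin u x v px pv hpx hpv a hma b hmb (by omega) (by omega))
  have dcb : G.dist c b ≤ ⌊δ⌋₊ := by
    refine Nat.le_floor (hthin u y v py pv hpy hpv c hmc b hmb (by omega) (by omega))
  have t1 : G.dist x y ≤ G.dist x a + G.dist a y := hG.dist_triangle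
  have t2 : G.dist a y ≤ G.dist a b + G.dist b y := hG.dist_triangle
  have t3 : G.dist b y ≤ G.dist b c + G.dist c y := hG.dist_triangle
  have e1 : G.dist x a = G.dist a x := SimpleGraph.dist_comm ..
  have e2 : G.dist b c = G.dist c b := SimpleGraph.dist_comm ..
  omega

/-- Route bound: a point on a geodesic from `x` to `y` is close to both
a geodesic from `x` to `v` and a geodesic from `y` to `u`. -/
lemma route_bound_aux {G : SimpleGraph V} (hG : G.Connected) {δ : ℝ}
    (hthin : ThinTriangles G δ) (u x y v : V) (p q : ℕ)
    (hpq : p + q = G.dist x y)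
    (h1 : 2 * p + G.dist y v ≤ G.dist x y + G.dist x v)
    (h2 : 2 * q + G.dist u x ≤ G.dist x y + G.dist u y) :
    G.dist u v + G.dist x y ≤ G.dist u y + G.dist x v + 2 * ⌊δ⌋₊ := by
  obtain ⟨g, hg⟩ := hG.exists_walk_length_eq_dist x y
  obtain ⟨h, hh⟩ := hG.exists_walk_length_eq_dist x v
  obtain ⟨k, hk⟩ := hG.exists_walk_length_eq_dist y u
  have try1 : G.dist x y ≤ G.dist x v + G.dist y v := by
    have h' := hG.dist_triangle (u := x) (v := v) (w := y)
    have h'' : G.dist v y = G.dist y v := SimpleGraph.dist_comm ..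
    omega
  have try2 : G.dist x y ≤ G.dist u x + G.dist u y := by
    have h' := hG.dist_triangle (u := x) (v := u) (w := y)
    have h'' : G.dist x u = G.dist u x := SimpleGraph.dist_comm ..
    omega
  have hpg : p ≤ g.length := by omega
  have hph : p ≤ h.length := by omega
  have hqk : q ≤ k.length := by
    have h'' : G.dist y u = G.dist u y := SimpleGraph.dist_comm ..
    omega
  obtain ⟨hmm, hm1, hm2⟩ := geo_point_aux hG g hg hpg
  obtain ⟨hmw, hw1, hw2⟩ := geo_point_aux hG h hh hph
  obtain ⟨hmz, hz1, hz2⟩ := geo_point_aux hG k hk hqk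
  set m := g.getVert p
  set w := h.getVert p
  set z := k.getVert q
  have dmw : G.dist m w ≤ ⌊δ⌋₊ :=
    Nat.le_floor (hthin x y v g h hg hh m hmm w hmw (by omega) (by omega))
  -- second application with apex y, using the reversed geodesic
  have hg' : g.reverse.length = G.dist y x := by
    rw [Walk.length_reverse, hg, SimpleGraph.dist_comm]
  have hmm' : m ∈ g.reverse.support := by
    rw [Walk.support_reverse]; exact List.mem_reverse.mpr hmm
  have hym : G.dist y m = q := by
    have : G.dist m y = G.dist y m := SimpleGraph.dist_comm ..
    omega
  have dmz : G.dist m z ≤ ⌊δ⌋₊ := by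
    refine Nat.le_floor (hthin y x u g.reverse k hg' hk m hmm' z hmz (by omega) ?_)
    have exy : G.dist y x = G.dist x y := SimpleGraph.dist_comm ..
    have exu : G.dist x u = G.dist u x := SimpleGraph.dist_comm ..
    have eyu : G.dist y u = G.dist u y := SimpleGraph.dist_comm ..
    omega
  have t1 : G.dist u v ≤ G.dist u z + G.dist z v := hG.dist_triangle
  have t2 : G.dist z v ≤ G.dist z m + G.dist m v := hG.dist_triangle
  have t3 : G.dist m v ≤ G.dist m w + G.dist w v := hG.dist_triangle
  have e1 : G.dist u z = G.dist z u := SimpleGraph.dist_comm ..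
  have e2 : G.dist z m = G.dist m z := SimpleGraph.dist_comm ..
  have e3 : G.dist w v = G.dist v w := SimpleGraph.dist_comm ..
  have e4 : G.dist x w = G.dist w x := SimpleGraph.dist_comm ..
  have eyu : G.dist y u = G.dist u y := SimpleGraph.dist_comm ..
  omega

/-- If `v ∈ F(u)`, then for every pair of vertices `x, y`,
`max{d(v,x), d(v,y)} ≥ d(x,y) - 2δ`. -/
theorem stmt_6 [Fintype V] (G : SimpleGraph V) (hG : G.Connected)
    (δ : ℝ) (hδ : 0 ≤ δ) (hthin : ThinTriangles G δ)
    (u v : V) (hv : G.dist u v = ecc G u) (x y : V) :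
    (G.dist x y : ℝ) - 2 * δ ≤ max (G.dist v x : ℝ) (G.dist v y : ℝ) := by
  have hA : G.dist u x ≤ G.dist u v := by
    rw [hv, ecc]; exact Finset.le_sup (Finset.mem_univ x)
  have hB : G.dist u y ≤ G.dist u v := by
    rw [hv, ecc]; exact Finset.le_sup (Finset.mem_univ y)
  -- commutations
  have cvx : G.dist v x = G.dist x v := SimpleGraph.dist_comm ..
  have cvy : G.dist v y = G.dist y v := SimpleGraph.dist_comm ..
  have cyx : G.dist y x = G.dist x y := SimpleGraph.dist_comm ..
  -- triangle inequalities
  have T1 : G.dist x y ≤ G.dist x v + G.dist y v := by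
    have h' := hG.dist_triangle (u := x) (v := v) (w := y)
    have h'' : G.dist v y = G.dist y v := SimpleGraph.dist_comm ..
    omega
  have T2 : G.dist x y ≤ G.dist u x + G.dist u y := by
    have h' := hG.dist_triangle (u := x) (v := u) (w := y)
    have h'' : G.dist x u = G.dist u x := SimpleGraph.dist_comm ..
    omega
  have T3 : G.dist x v ≤ G.dist u x + G.dist u v := by
    have h' := hG.dist_triangle (u := x) (v := u) (w := v)
    have h'' : G.dist x u = G.dist u x := SimpleGraph.dist_comm ..
    omega
  have T4 : G.dist y v ≤ G.dist u y + G.dist u v := by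
    have h' := hG.dist_triangle (u := y) (v := u) (w := v)
    have h'' : G.dist y u = G.dist u y := SimpleGraph.dist_comm ..
    omega
  have T5 : G.dist x v ≤ G.dist x y + G.dist y v := hG.dist_triangle
  have T6 : G.dist y v ≤ G.dist x y + G.dist x v := by
    have h' := hG.dist_triangle (u := y) (v := x) (w := v)
    omega
  -- the key natural-number inequality
  have key : G.dist x y ≤ max (G.dist x v) (G.dist y v) + 2 * ⌊δ⌋₊ := by
    set D := G.dist x y with hD
    set A := G.dist u x with hAx
    set B := G.dist u y with hBy
    set R := G.dist u v with hR
    set Mx := G.dist x v with hMx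
    set My := G.dist y v with hMy
    set p₁ := (min (D + Mx - My) (2 * D)) / 2 with hp₁
    by_cases hc1 : D + A ≤ 2 * p₁ + B
    · have hr := route_bound_aux hG hthin u x y v p₁ (D - p₁) (by omega) (by omega) (by omega)
      omega
    · set q₂ := (min (D + My - Mx) (2 * D)) / 2 with hq₂
      by_cases hc2 : D + B ≤ 2 * q₂ + A
      · have hr := route_bound_aux hG hthin u y x v q₂ (G.dist y x - q₂) ?_ ?_ ?_
        · omega
        · omega
        · omega
        · omega
      · set t₀ := (min (A + R - Mx) (B + R - My)) / 2 with ht₀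
        have hO := chain_bound_aux hG hthin u x y v t₀ (by omega) (by omega)
        omega
  -- now cast to ℝ
  have hfl : (⌊δ⌋₊ : ℝ) ≤ δ := Nat.floor_le hδ
  have hcast : (G.dist x y : ℝ) ≤ (max (G.dist x v) (G.dist y v) : ℕ) + 2 * (⌊δ⌋₊ : ℝ) := by
    exact_mod_cast key
  have hmax : ((max (G.dist x v) (G.dist y v) : ℕ) : ℝ)
      = max (G.dist v x : ℝ) (G.dist v y : ℝ) := by
    rw [cvx, cvy]; push_cast [Nat.cast_max]; ring_nf
  linarith [hcast, hmax.le, hmax.ge]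
end

section
/- Let G be a finite connected graph with δ-thin triangles. For every integer k ≥ 0 and every pair of vertices x,y with ecc_G(x) = ecc_G(y) = rad(G) + k, one has d_G(x,y) ≤ 2k + 2δ + 1. In particular, the diameter of the center C(G) in G is at most 2δ + 1. -/
open SimpleGraph

variable {V : Type*}

lemma myLengthDrop {G : SimpleGraph V} {u v : V} (p : G.Walk u v) (n : ℕ) :
    (p.drop n).length = p.length - n := by
  induction p generalizing n with
  | nil => simp [Walk.drop]
  | cons h q ih =>
    cases n with
    | zero => simp [Walk.drop]
    | succ n => simp [Walk.drop, ih]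

lemma myDistGetVertLe {G : SimpleGraph V} {u v : V} (p : G.Walk u v) {t : ℕ}
    (ht : t ≤ p.length) :
    G.dist u (p.getVert t) ≤ t ∧ G.dist (p.getVert t) v ≤ p.length - t := by
  constructor
  · have h1 : p.reverse.getVert (p.length - t) = p.getVert t := by
      rw [Walk.getVert_reverse]; congr 1; omega
    have hd := SimpleGraph.dist_le ((p.reverse.drop (p.length - t)).copy (by rw [h1]) rfl)
    rw [SimpleGraph.dist_comm]
    refine hd.trans ?_
    rw [Walk.length_copy, myLengthDrop, Walk.length_reverse]
    omega
  · have := SimpleGraph.dist_le (p.drop t)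
    simpa [myLengthDrop] using this

lemma myGeodesicSplit {G : SimpleGraph V} (hG : G.Connected) {x y : V} (p : G.Walk x y)
    (hp : p.length = G.dist x y) {t : ℕ} (ht : t ≤ p.length) :
    p.getVert t ∈ p.support ∧ G.dist x (p.getVert t) = t ∧
      G.dist (p.getVert t) y = p.length - t := by
  obtain ⟨h1, h2⟩ := myDistGetVertLe p ht
  have htri := hG.dist_triangle (u := x) (v := p.getVert t) (w := y)
  rw [← hp] at htri
  refine ⟨Walk.mem_support_iff_exists_getVert.mpr ⟨t, rfl, ht⟩, by omega, by omega⟩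

lemma myMain [Fintype V] (G : SimpleGraph V) (hG : G.Connected)
    (δ : ℝ) (hδ : 0 ≤ δ) (hthin : ThinTriangles G δ) (k : ℕ) (x y : V)
    (hx : ecc G x = rad G + k) (hy : ecc G y = rad G + k) :
    (G.dist x y : ℝ) ≤ 2 * (k : ℝ) + 2 * δ + 1 := by
  have hne : Nonempty V := ⟨x⟩
  set d := G.dist x y with hd
  set t := d / 2 with htdef
  obtain ⟨p, hp⟩ := hG.exists_walk_length_eq_dist x y
  have htle : t ≤ p.length := by rw [hp]; omega
  obtain ⟨hmsup, hxm, hmy⟩ := myGeodesicSplit hG p hp htle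
  set m := p.getVert t with hmdef
  rw [hp] at hmy
  -- z is a farthest vertex from m
  obtain ⟨z, -, hz⟩ := Finset.exists_mem_eq_sup Finset.univ Finset.univ_nonempty
    (fun u => G.dist m u)
  have hradm : rad G ≤ G.dist m z := by
    rw [← hz]
    exact Nat.sInf_le ⟨m, rfl⟩
  have hxz : G.dist x z ≤ rad G + k := by
    rw [← hx]; exact Finset.le_sup (Finset.mem_univ z)
  have hyz : G.dist y z ≤ rad G + k := by
    rw [← hy]; exact Finset.le_sup (Finset.mem_univ z)
  have htri1 : G.dist x y ≤ G.dist x z + G.dist z y := hG.dist_triangle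
  have hcomm : G.dist z y = G.dist y z := SimpleGraph.dist_comm ..
  -- the key claim: t ≤ δ + k
  have key : (t : ℝ) ≤ δ + k := by
    by_cases hc : 2 * G.dist x m + G.dist y z ≤ G.dist x y + G.dist x z
    · -- apex x
      obtain ⟨p2, hp2⟩ := hG.exists_walk_length_eq_dist x z
      have htle2 : t ≤ p2.length := by rw [hp2]; omega
      obtain ⟨husup, hxu, huz⟩ := myGeodesicSplit hG p2 hp2 htle2
      rw [hp2] at huz
      set u := p2.getVert t with hudef
      have hthin' := hthin x y z p p2 hp hp2 m hmsup u husup (by rw [hxm, hxu]) hc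
      have htri2 : G.dist m z ≤ G.dist m u + G.dist u z := hG.dist_triangle
      rw [huz] at htri2
      have hz1 : (G.dist m z : ℝ) ≤ (G.dist m u : ℝ) + ((G.dist x z - t : ℕ) : ℝ) := by
        exact_mod_cast htri2
      have hcast : ((G.dist x z - t : ℕ) : ℝ) = (G.dist x z : ℝ) - (t : ℝ) := by
        have hle : t ≤ G.dist x z := by omega
        exact Nat.cast_sub hle
      have h1 : (rad G : ℝ) ≤ (G.dist m z : ℝ) := by exact_mod_cast hradm
      have h2 : (G.dist x z : ℝ) ≤ (rad G : ℝ) + k := by exact_mod_cast hxz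
      rw [hcast] at hz1; linarith
    · -- apex y
      push_neg at hc
      have hym : G.dist y m = d - t := by
        rw [SimpleGraph.dist_comm (u := y) (v := m)]; exact hmy
      have hyx : G.dist y x = d := by
        rw [SimpleGraph.dist_comm (u := y) (v := x)]
      have hc' : 2 * G.dist y m + G.dist x z ≤ G.dist y x + G.dist y z := by
        omega
      have hms : m ∈ p.reverse.support := by
        rw [Walk.support_reverse]; exact List.mem_reverse.mpr hmsup
      have hplen : p.reverse.length = G.dist y x := by
        rw [Walk.length_reverse, hp, hyx]
      obtain ⟨p2, hp2⟩ := hG.exists_walk_length_eq_dist y z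
      have hs : d - t ≤ p2.length := by rw [hp2]; omega
      obtain ⟨husup, hyu, huz⟩ := myGeodesicSplit hG p2 hp2 hs
      rw [hp2] at huz
      set u := p2.getVert (d - t) with hudef
      have hthin' := hthin y x z p.reverse p2 hplen hp2 m hms u husup
        (by rw [hym, hyu]) (by rw [hym] at hc' ⊢; exact hc')
      have htri2 : G.dist m z ≤ G.dist m u + G.dist u z := hG.dist_triangle
      rw [huz] at htri2
      have hz1 : (G.dist m z : ℝ) ≤ (G.dist m u : ℝ) + ((G.dist y z - (d - t) : ℕ) : ℝ) := by
        exact_mod_cast htri2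
      have hcast : ((G.dist y z - (d - t) : ℕ) : ℝ) = (G.dist y z : ℝ) - ((d - t : ℕ) : ℝ) := by
        have hle : d - t ≤ G.dist y z := by omega
        exact Nat.cast_sub hle
      have h1 : (rad G : ℝ) ≤ (G.dist m z : ℝ) := by exact_mod_cast hradm
      have h2 : (G.dist y z : ℝ) ≤ (rad G : ℝ) + k := by exact_mod_cast hyz
      have hdt : (t : ℝ) ≤ ((d - t : ℕ) : ℝ) := by
        have : t ≤ d - t := by omega
        exact_mod_cast this
      rw [hcast] at hz1; linarith
  have hfin : (d : ℝ) ≤ 2 * t + 1 := by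
    have : d ≤ 2 * t + 1 := by omega
    exact_mod_cast this
  linarith

/-- For every `k ≥ 0` and every pair of vertices `x, y` with
`ecc(x) = ecc(y) = rad(G) + k`, `d(x,y) ≤ 2k + 2δ + 1`; in particular
the diameter of the center `C(G)` in `G` is at most `2δ + 1`. -/
theorem stmt_9 [Fintype V] (G : SimpleGraph V) (hG : G.Connected)
    (δ : ℝ) (hδ : 0 ≤ δ) (hthin : ThinTriangles G δ) :
    (∀ (k : ℕ) (x y : V), ecc G x = rad G + k → ecc G y = rad G + k →
      (G.dist x y : ℝ) ≤ 2 * (k : ℝ) + 2 * δ + 1) ∧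
    (∀ x y : V, ecc G x = rad G → ecc G y = rad G →
      (G.dist x y : ℝ) ≤ 2 * δ + 1) := by
  refine ⟨fun k x y hx hy => myMain G hG δ hδ hthin k x y hx hy, fun x y hx hy => ?_⟩
  have := myMain G hG δ hδ hthin 0 x y (by simpa using hx) (by simpa using hy)
  simpa using this
end

section
/- Let G be a finite connected graph with δ-thin triangles, let c be a middle vertex of any (u,v)-geodesic between a pair u,v of mutually distant vertices of G, and let T be a BFS(c)-tree of G. Then for every vertex x of G, ecc_G(x) ≤ ecc_T(x) ≤ ecc_G(x) + 3δ + 1. -/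
open SimpleGraph

variable {V : Type*}

lemma exists_split {G : SimpleGraph V} {a b : V} (p : G.Walk a b) (n : ℕ) (hn : n ≤ p.length) :
    ∃ (q : G.Walk a (p.getVert n)) (r : G.Walk (p.getVert n) b),
      q.length = n ∧ r.length = p.length - n := by
  induction p generalizing n with
  | nil =>
    simp only [Walk.length_nil, Nat.le_zero] at hn
    subst hn
    exact ⟨Walk.nil, Walk.nil, rfl, rfl⟩
  | cons h q ih =>
    cases n with
    | zero =>
      refine ⟨(Walk.nil).copy rfl ((Walk.cons h q).getVert_zero).symm,
        ((Walk.cons h q)).copy ((Walk.cons h q).getVert_zero).symm rfl, ?_, ?_⟩ <;> simp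
    | succ n =>
      have hn' : n ≤ q.length := by simpa using hn
      obtain ⟨q2, r2, h1, h2⟩ := ih n hn'
      refine ⟨(Walk.cons h q2).copy rfl (Walk.getVert_cons_succ q h).symm,
        r2.copy (Walk.getVert_cons_succ q h).symm rfl, ?_, ?_⟩ <;> simp [h1, h2]

lemma geodesic_split {G : SimpleGraph V} (hG : G.Connected) {a b : V} (p : G.Walk a b)
    (hp : p.length = G.dist a b) {n : ℕ} (hn : n ≤ p.length) :
    G.dist a (p.getVert n) = n ∧ G.dist (p.getVert n) b = p.length - n := by
  obtain ⟨q, r, hq, hr⟩ := exists_split p n hn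
  have h1 : G.dist a (p.getVert n) ≤ n := le_trans (SimpleGraph.dist_le q) hq.le
  have h2 : G.dist (p.getVert n) b ≤ p.length - n := le_trans (SimpleGraph.dist_le r) hr.le
  have h3 : G.dist a b ≤ G.dist a (p.getVert n) + G.dist (p.getVert n) b :=
    hG.dist_triangle
  omega

/-- If `c` is a middle vertex of a geodesic between two mutually
distant vertices `u, v` and `T` is a `BFS(c)`-tree of `G`, then for every vertex
`x`, `ecc_G(x) ≤ ecc_T(x) ≤ ecc_G(x) + 3δ + 1`. -/
theorem stmt_10 [Fintype V] (G : SimpleGraph V) (hG : G.Connected)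
    (δ : ℝ) (hδ : 0 ≤ δ) (hthin : ThinTriangles G δ)
    (u v : V) (hu : G.dist u v = ecc G u) (hv : G.dist u v = ecc G v)
    (P : G.Walk u v) (hP : P.length = G.dist u v)
    (c : V) (hcP : c ∈ P.support)
    (hmid : |(G.dist u c : ℝ) - (G.dist u v : ℝ) / 2| ≤ 1 / 2)
    (T : SimpleGraph V) (hTG : T ≤ G) (hT : T.IsTree)
    (hbfs : ∀ x : V, T.dist c x = G.dist c x) :
    ∀ x : V, ecc G x ≤ ecc T x ∧ (ecc T x : ℝ) ≤ (ecc G x : ℝ) + 3 * δ + 1 := by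
  have hne : Nonempty V := ⟨u⟩
  classical
  set k := G.dist u v with hk
  -- position of c on P : dist u c + dist c v = k
  have hsplit : G.dist u c + G.dist c v = k := by
    have hts := congrArg Walk.length (P.take_spec hcP)
    rw [Walk.length_append] at hts
    have h1 : G.dist u c ≤ (P.takeUntil c hcP).length := SimpleGraph.dist_le _
    have h2 : G.dist c v ≤ (P.dropUntil c hcP).length := SimpleGraph.dist_le _
    have h3 : G.dist u v ≤ G.dist u c + G.dist c v := hG.dist_triangle
    omega
  have hmid1 : (k : ℝ) / 2 - 1 / 2 ≤ (G.dist u c : ℝ) := by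
    have := abs_le.mp hmid; linarith [this.1]
  have hmid2 : (G.dist u c : ℝ) ≤ (k : ℝ) / 2 + 1 / 2 := by
    have := abs_le.mp hmid; linarith [this.2]
  -- key lemma
  have hkey : ∀ x : V, ∃ D : ℕ, D ≤ k ∧ D ≤ ecc G x ∧
      (G.dist c x : ℝ) ≤ δ + (D : ℝ) - ((k : ℝ) / 2 - 1 / 2) := by
    intro x
    have hk_le : k ≤ G.dist u x + G.dist v x := by
      have h := hG.dist_triangle (u := u) (v := x) (w := v)
      rw [SimpleGraph.dist_comm (u:=x) (v:=v)] at h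
      omega
    have hxu : G.dist u x ≤ ecc G x := by
      rw [G.dist_comm]; exact Finset.le_sup (Finset.mem_univ u)
    have hxv : G.dist v x ≤ ecc G x := by
      rw [G.dist_comm]; exact Finset.le_sup (Finset.mem_univ v)
    have hku : G.dist u x ≤ k := hu ▸ Finset.le_sup (Finset.mem_univ x)
    have hkv : G.dist v x ≤ k := hv ▸ Finset.le_sup (Finset.mem_univ x)
    by_cases hcase : 2 * G.dist u c + G.dist v x ≤ k + G.dist u x
    · -- apex u
      have hduc_le : G.dist u c ≤ G.dist u x := by omega
      obtain ⟨Q, hQ⟩ := hG.exists_walk_length_eq_dist u x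
      have hn : G.dist u c ≤ Q.length := by rw [hQ]; exact hduc_le
      obtain ⟨hp1, hp2⟩ := geodesic_split hG Q hQ hn
      have hpmem : Q.getVert (G.dist u c) ∈ Q.support :=
        Walk.mem_support_iff_exists_getVert.mpr ⟨G.dist u c, rfl, hn⟩
      have hthin' := hthin u v x P Q hP hQ c hcP _ hpmem hp1.symm hcase
      have htri : G.dist c x ≤ G.dist c (Q.getVert (G.dist u c)) +
          G.dist (Q.getVert (G.dist u c)) x := hG.dist_triangle
      refine ⟨G.dist u x, hku, hxu, ?_⟩
      have hp2' : G.dist (Q.getVert (G.dist u c)) x = G.dist u x - G.dist u c := by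
        rw [hp2, hQ]
      have hcast : (G.dist (Q.getVert (G.dist u c)) x : ℝ)
          = (G.dist u x : ℝ) - (G.dist u c : ℝ) := by
        rw [hp2']; push_cast [Nat.cast_sub hduc_le]; ring
      have htriR : (G.dist c x : ℝ) ≤ (G.dist c (Q.getVert (G.dist u c)) : ℝ) +
          (G.dist (Q.getVert (G.dist u c)) x : ℝ) := by exact_mod_cast htri
      linarith
    · -- apex v
      have hvc : G.dist v c = k - G.dist u c := by rw [G.dist_comm]; omega
      have hcond : 2 * G.dist v c + G.dist u x ≤ G.dist v u + G.dist v x := by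
        rw [hvc, SimpleGraph.dist_comm (u:=v) (v:=u)]; omega
      have hdvc_le : G.dist v c ≤ G.dist v x := by rw [hvc]; omega
      obtain ⟨Q, hQ⟩ := hG.exists_walk_length_eq_dist v x
      have hn : G.dist v c ≤ Q.length := by rw [hQ]; exact hdvc_le
      obtain ⟨hp1, hp2⟩ := geodesic_split hG Q hQ hn
      have hpmem : Q.getVert (G.dist v c) ∈ Q.support :=
        Walk.mem_support_iff_exists_getVert.mpr ⟨G.dist v c, rfl, hn⟩
      have hPrev : P.reverse.length = G.dist v u := by
        rw [Walk.length_reverse, hP, G.dist_comm]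
      have hcrev : c ∈ P.reverse.support := by
        rw [Walk.support_reverse]; exact List.mem_reverse.mpr hcP
      have hthin' := hthin v u x P.reverse Q hPrev hQ c hcrev _ hpmem hp1.symm hcond
      have htri : G.dist c x ≤ G.dist c (Q.getVert (G.dist v c)) +
          G.dist (Q.getVert (G.dist v c)) x := hG.dist_triangle
      refine ⟨G.dist v x, hkv, hxv, ?_⟩
      have hp2' : G.dist (Q.getVert (G.dist v c)) x = G.dist v x - G.dist v c := by
        rw [hp2, hQ]
      have hcast : (G.dist (Q.getVert (G.dist v c)) x : ℝ)
          = (G.dist v x : ℝ) - (G.dist v c : ℝ) := by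
        rw [hp2']; push_cast [Nat.cast_sub hdvc_le]; ring
      have hvcR : ((k : ℝ) / 2 - 1 / 2) ≤ (G.dist v c : ℝ) := by
        have hduc_k : G.dist u c ≤ k := by omega
        have : (G.dist v c : ℝ) = (k : ℝ) - (G.dist u c : ℝ) := by
          rw [hvc]; push_cast [Nat.cast_sub hduc_k]; ring
        linarith
      have htriR : (G.dist c x : ℝ) ≤ (G.dist c (Q.getVert (G.dist v c)) : ℝ) +
          (G.dist (Q.getVert (G.dist v c)) x : ℝ) := by exact_mod_cast htri
      have hdcp : (G.dist c (Q.getVert (G.dist v c)) : ℝ) ≤ δ := by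
        rw [G.dist_comm] at hthin' ⊢
        exact hthin'
      linarith
  intro x
  constructor
  · exact Finset.sup_mono_fun fun y _ =>
      Reachable.dist_anti hTG (hT.isConnected.preconnected x y)
  · obtain ⟨y, -, hy⟩ := Finset.exists_mem_eq_sup Finset.univ Finset.univ_nonempty
      (fun y => T.dist x y)
    have htri : T.dist x y ≤ T.dist x c + T.dist c y := hT.isConnected.dist_triangle
    have hxc : T.dist x c = G.dist c x := by rw [T.dist_comm]; exact hbfs x
    have hcy : T.dist c y = G.dist c y := hbfs y
    obtain ⟨D1, hD1k, hD1e, hb1⟩ := hkey x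
    obtain ⟨D2, hD2k, -, hb2⟩ := hkey y
    have heT : ecc T x = T.dist x y := hy
    have htriR : (T.dist x y : ℝ) ≤ (G.dist c x : ℝ) + (G.dist c y : ℝ) := by
      rw [← hxc, ← hcy]; exact_mod_cast htri
    have hD1R : (D1 : ℝ) ≤ (ecc G x : ℝ) := by exact_mod_cast hD1e
    have hD2R : (D2 : ℝ) ≤ (k : ℝ) := by exact_mod_cast hD2k
    rw [heT]
    linarith
end

section
/- Let G be a finite connected graph with δ-thin triangles, let u be any vertex, let v ∈ F(u), let t ∈ F(v), let c be a vertex of a (v,t)-geodesic at distance ⌈d_G(v,t)/2⌉ from t, and let T be a BFS(c)-tree of G. Then for every vertex x of G, ecc_G(x) ≤ ecc_T(x) ≤ ecc_G(x) + 6δ + 1. -/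
open SimpleGraph

variable {V : Type*}

namespace StmtAux

lemma getVert_mem_support {G : SimpleGraph V} {a b : V} (W : G.Walk a b) (i : ℕ) :
    W.getVert i ∈ W.support := by
  induction W generalizing i with
  | nil =>
    rw [SimpleGraph.Walk.getVert_of_length_le _ (by simp)]; simp
  | cons h p ih =>
    cases i with
    | zero => simp [SimpleGraph.Walk.getVert]
    | succ n =>
      rw [SimpleGraph.Walk.getVert_cons_succ]
      simp only [SimpleGraph.Walk.support_cons, List.mem_cons]
      exact Or.inr (ih n)

lemma dist_getVert_le {G : SimpleGraph V} (hG : G.Connected) {a b : V} (W : G.Walk a b) (i : ℕ) :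
    G.dist a (W.getVert i) ≤ i := by
  induction W generalizing i with
  | nil =>
    rw [SimpleGraph.Walk.getVert_of_length_le _ (by simp)]; simp [SimpleGraph.dist_self]
  | @cons a a' b h p ih =>
    cases i with
    | zero => simp [SimpleGraph.Walk.getVert, SimpleGraph.dist_self]
    | succ n =>
      rw [SimpleGraph.Walk.getVert_cons_succ]
      calc G.dist a (p.getVert n) ≤ G.dist a a' + G.dist a' (p.getVert n) := hG.dist_triangle
        _ ≤ n + 1 := by
            have h1 : G.dist a a' = 1 := SimpleGraph.dist_eq_one_iff_adj.mpr h
            have := ih n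
            omega

lemma dist_getVert_end_le {G : SimpleGraph V} {a b : V} (W : G.Walk a b) (i : ℕ) :
    G.dist (W.getVert i) b ≤ W.length - i := by
  induction W generalizing i with
  | nil =>
    rw [SimpleGraph.Walk.getVert_of_length_le _ (by simp)]; simp [SimpleGraph.dist_self]
  | @cons a a' b h p ih =>
    cases i with
    | zero =>
      simpa [SimpleGraph.Walk.getVert] using SimpleGraph.dist_le (SimpleGraph.Walk.cons h p)
    | succ n =>
      rw [SimpleGraph.Walk.getVert_cons_succ]
      simpa using ih n

lemma dist_getVert {G : SimpleGraph V} (hG : G.Connected) {a b : V} (W : G.Walk a b)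
    (hW : W.length = G.dist a b) {i : ℕ} (hi : i ≤ W.length) :
    G.dist a (W.getVert i) = i ∧ G.dist (W.getVert i) b = W.length - i := by
  have h1 := dist_getVert_le hG W i
  have h2 := dist_getVert_end_le W i
  have h3 : G.dist a b ≤ G.dist a (W.getVert i) + G.dist (W.getVert i) b := hG.dist_triangle
  omega

lemma dist_split {G : SimpleGraph V} (hG : G.Connected) {a b p : V} (W : G.Walk a b)
    (hW : W.length = G.dist a b) (hp : p ∈ W.support) :
    G.dist a p + G.dist p b = G.dist a b := by
  classical
  have hs := W.take_spec hp
  have hlen : (W.takeUntil p hp).length + (W.dropUntil p hp).length = W.length := by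
    rw [← SimpleGraph.Walk.length_append, hs]
  have h1 : G.dist a p ≤ (W.takeUntil p hp).length := SimpleGraph.dist_le _
  have h2 : G.dist p b ≤ (W.dropUntil p hp).length := SimpleGraph.dist_le _
  have h3 : G.dist a b ≤ G.dist a p + G.dist p b := hG.dist_triangle
  omega

/-- Thin-triangle application in ℕ with `k = ⌊δ⌋₊`. -/
lemma thin_nat {G : SimpleGraph V} {δ : ℝ} (hthin : ThinTriangles G δ)
    {x y z p q : V} (W1 : G.Walk x y) (W2 : G.Walk x z)
    (h1 : W1.length = G.dist x y) (h2 : W2.length = G.dist x z)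
    (hp : p ∈ W1.support) (hq : q ∈ W2.support)
    (hpq : G.dist x p = G.dist x q)
    (hcond : 2 * G.dist x p + G.dist y z ≤ G.dist x y + G.dist x z) :
    G.dist p q ≤ ⌊δ⌋₊ :=
  Nat.le_floor (hthin x y z W1 W2 h1 h2 p hp q hq hpq hcond)

/-- Side lemma: a vertex `p` on a geodesic `[y,z]` satisfying the Gromov product
condition w.r.t. `w` is, up to `⌊δ⌋₊`, on a geodesic `[y,w]`. -/
lemma side {G : SimpleGraph V} (hG : G.Connected) {δ : ℝ}
    (hthin : ThinTriangles G δ) {y z w p : V} (W : G.Walk y z)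
    (hW : W.length = G.dist y z) (hp : p ∈ W.support)
    (hcond : 2 * G.dist y p + G.dist z w ≤ G.dist y z + G.dist y w) :
    G.dist w p + G.dist y p ≤ G.dist y w + ⌊δ⌋₊ := by
  obtain ⟨Q, hQ⟩ := hG.exists_walk_length_eq_dist y w
  set i := G.dist y p with hi
  have htri : G.dist y z ≤ G.dist y w + G.dist w z := hG.dist_triangle
  have hzw : G.dist w z = G.dist z w := SimpleGraph.dist_comm
  have hiQ : i ≤ Q.length := by omega
  obtain ⟨hq1, hq2⟩ := dist_getVert hG Q hQ hiQ
  have hthin' : G.dist p (Q.getVert i) ≤ ⌊δ⌋₊ :=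
    thin_nat hthin W Q hW hQ hp (getVert_mem_support Q i) (by omega) hcond
  have ht1 : G.dist w p ≤ G.dist w (Q.getVert i) + G.dist (Q.getVert i) p := hG.dist_triangle
  have hc1 : G.dist w (Q.getVert i) = G.dist (Q.getVert i) w := SimpleGraph.dist_comm
  have hc2 : G.dist (Q.getVert i) p = G.dist p (Q.getVert i) := SimpleGraph.dist_comm
  omega

/-- Diameter-type bound: every vertex is within `d(v,t) + 2⌊δ⌋₊ + 1` of `t`. -/
lemma dist_t_le {G : SimpleGraph V} (hG : G.Connected) {δ : ℝ}
    (hthin : ThinTriangles G δ) {u v t : V}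
    (hut : G.dist u t ≤ G.dist u v) (hvt : ∀ z, G.dist v z ≤ G.dist v t)
    (huz : ∀ z, G.dist u z ≤ G.dist u v) (y : V) :
    G.dist t y ≤ G.dist v t + 2 * ⌊δ⌋₊ + 1 := by
  obtain ⟨Wt, hWt⟩ := hG.exists_walk_length_eq_dist v t
  obtain ⟨Wy, hWy⟩ := hG.exists_walk_length_eq_dist v y
  obtain ⟨Wu, hWu⟩ := hG.exists_walk_length_eq_dist v u
  set A := G.dist v y with hA
  set ρ := A / 2 with hρ
  have hAD : A ≤ G.dist v t := hvt y
  have huyv : G.dist u y ≤ G.dist u v := huz y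
  have hvu : G.dist v u = G.dist u v := SimpleGraph.dist_comm
  have htu : G.dist t u = G.dist u t := SimpleGraph.dist_comm
  have hyu : G.dist y u = G.dist u y := SimpleGraph.dist_comm
  have htriA : A ≤ G.dist v u + G.dist u y := by
    have := hG.dist_triangle (u := v) (v := u) (w := y); omega
  have hρt : ρ ≤ Wt.length := by omega
  have hρy : ρ ≤ Wy.length := by omega
  have hρu : ρ ≤ Wu.length := by omega
  obtain ⟨hp1, hp2⟩ := dist_getVert hG Wt hWt hρt
  obtain ⟨hq1, hq2⟩ := dist_getVert hG Wy hWy hρy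
  obtain ⟨hs1, hs2⟩ := dist_getVert hG Wu hWu hρu
  have hps : G.dist (Wt.getVert ρ) (Wu.getVert ρ) ≤ ⌊δ⌋₊ :=
    thin_nat hthin Wt Wu hWt hWu (getVert_mem_support _ _) (getVert_mem_support _ _)
      (by omega) (by omega)
  have hqs : G.dist (Wy.getVert ρ) (Wu.getVert ρ) ≤ ⌊δ⌋₊ :=
    thin_nat hthin Wy Wu hWy hWu (getVert_mem_support _ _) (getVert_mem_support _ _)
      (by omega) (by omega)
  have h1 : G.dist t y ≤ G.dist t (Wt.getVert ρ) + G.dist (Wt.getVert ρ) y := hG.dist_triangle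
  have h2 : G.dist (Wt.getVert ρ) y ≤
      G.dist (Wt.getVert ρ) (Wu.getVert ρ) + G.dist (Wu.getVert ρ) y := hG.dist_triangle
  have h3 : G.dist (Wu.getVert ρ) y ≤
      G.dist (Wu.getVert ρ) (Wy.getVert ρ) + G.dist (Wy.getVert ρ) y := hG.dist_triangle
  have hc1 : G.dist t (Wt.getVert ρ) = G.dist (Wt.getVert ρ) t := SimpleGraph.dist_comm
  have hc2 : G.dist (Wu.getVert ρ) (Wy.getVert ρ) = G.dist (Wy.getVert ρ) (Wu.getVert ρ) :=
    SimpleGraph.dist_comm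
  omega

end StmtAux

/-- If `v ∈ F(u)`, `t ∈ F(v)`, `c` is a vertex of a `(v,t)`-geodesic
at distance `⌈d(v,t)/2⌉` from `t` and `T` is a `BFS(c)`-tree of `G`, then for
every vertex `x`, `ecc_G(x) ≤ ecc_T(x) ≤ ecc_G(x) + 6δ + 1`. -/
theorem stmt_11 [Fintype V] (G : SimpleGraph V) (hG : G.Connected)
    (δ : ℝ) (hδ : 0 ≤ δ) (hthin : ThinTriangles G δ)
    (u v t : V) (hv : G.dist u v = ecc G u) (ht : G.dist v t = ecc G v)
    (P : G.Walk v t) (hP : P.length = G.dist v t)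
    (c : V) (hcP : c ∈ P.support) (hc : G.dist t c = (G.dist v t + 1) / 2)
    (T : SimpleGraph V) (hTG : T ≤ G) (hT : T.IsTree)
    (hbfs : ∀ x : V, T.dist c x = G.dist c x) :
    ∀ x : V, ecc G x ≤ ecc T x ∧ (ecc T x : ℝ) ≤ (ecc G x : ℝ) + 6 * δ + 1 := by
  classical
  set k := ⌊δ⌋₊ with hk
  have hTconn : T.Connected := hT.isConnected
  -- pointwise dist comparison
  have hdist_le : ∀ x y : V, G.dist x y ≤ T.dist x y := by
    intro x y
    obtain ⟨W, hW⟩ := hTconn.exists_walk_length_eq_dist x y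
    calc G.dist x y ≤ (W.mapLe hTG).length := SimpleGraph.dist_le _
      _ = W.length := by simp
      _ = T.dist x y := hW
  have hecc_le : ∀ x : V, ecc G x ≤ ecc T x := by
    intro x
    exact Finset.sup_mono_fun fun y _ => hdist_le x y
  -- basic eccentricity facts
  have hle_ecc : ∀ x y : V, G.dist x y ≤ ecc G x := by
    intro x y; exact Finset.le_sup (Finset.mem_univ y)
  have huz : ∀ z, G.dist u z ≤ G.dist u v := fun z => hv ▸ hle_ecc u z
  have hvz : ∀ z, G.dist v z ≤ G.dist v t := fun z => ht ▸ hle_ecc v z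
  have hut : G.dist u t ≤ G.dist u v := huz t
  set D := G.dist v t with hD
  set m := G.dist t c with hm
  set j := G.dist v c with hj
  have hct : G.dist c t = m := SimpleGraph.dist_comm
  have hsplit : j + m = D := by
    have := StmtAux.dist_split hG P hP hcP
    omega
  have hm2 : m = (D + 1) / 2 := hc
  have hjm : j ≤ m ∧ m ≤ j + 1 := by omega
  -- the dichotomy
  have hdich : ∀ z : V, G.dist z c + j ≤ G.dist v z + k ∨ G.dist z c + m ≤ G.dist t z + k := by
    intro z
    by_cases h1 : 2 * j + G.dist t z ≤ D + G.dist v z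
    · left
      have := StmtAux.side hG hthin P hP hcP (by omega : 2 * G.dist v c + G.dist t z ≤
        G.dist v t + G.dist v z)
      omega
    · right
      have hrev : P.reverse.length = G.dist t v := by
        rw [SimpleGraph.Walk.length_reverse, hP]; exact SimpleGraph.dist_comm
      have hcrev : c ∈ P.reverse.support := by
        rwa [SimpleGraph.Walk.support_reverse, List.mem_reverse]
      have htv : G.dist t v = D := SimpleGraph.dist_comm
      have := StmtAux.side hG hthin P.reverse hrev hcrev (by omega : 2 * G.dist t c + G.dist v z ≤
        G.dist t v + G.dist t z)
      omega
  have hdty : ∀ y, G.dist t y ≤ D + 2 * k + 1 :=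
    StmtAux.dist_t_le hG hthin hut hvz huz
  -- main bound
  have hmain : ∀ x y : V, G.dist x c + G.dist c y ≤ ecc G x + 4 * k + 1 := by
    intro x y
    have hxv : G.dist v x ≤ ecc G x := by
      have := hle_ecc x v
      have h' : G.dist v x = G.dist x v := SimpleGraph.dist_comm
      omega
    have hxt : G.dist t x ≤ ecc G x := by
      have := hle_ecc x t
      have h' : G.dist t x = G.dist x t := SimpleGraph.dist_comm
      omega
    have hyv : G.dist v y ≤ D := hvz y
    have hyt : G.dist t y ≤ D + 2 * k + 1 := hdty y
    have hcy : G.dist c y = G.dist y c := SimpleGraph.dist_comm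
    rcases hdich x with hx | hx <;> rcases hdich y with hy | hy <;> omega
  intro x
  refine ⟨hecc_le x, ?_⟩
  have hTbound : ecc T x ≤ ecc G x + 4 * k + 1 := by
    apply Finset.sup_le
    intro y _
    have h1 : T.dist x y ≤ T.dist x c + T.dist c y := hTconn.dist_triangle
    have h2 : T.dist x c = G.dist x c := by
      have hxc : T.dist x c = T.dist c x := SimpleGraph.dist_comm
      have hgxc : G.dist c x = G.dist x c := SimpleGraph.dist_comm
      rw [hxc, hbfs x, hgxc]
    have h3 : T.dist c y = G.dist c y := hbfs y
    have := hmain x y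
    omega
  have hkδ : (k : ℝ) ≤ δ := Nat.floor_le hδ
  have hcast : (ecc T x : ℝ) ≤ (ecc G x : ℝ) + 4 * (k : ℝ) + 1 := by
    exact_mod_cast hTbound
  nlinarith [hcast, hkδ, hδ]
end

section
/- Let G be a finite connected graph with δ-thin triangles, let s be any vertex and T a BFS(s)-tree of G. For all vertices x and y of G, with k = sl_T(x,y;δ) the largest index i ≤ min(h(x),h(y)) such that d_G(x_i,y_i) ≤ δ, one has h(x) + h(y) − 2k − 1 ≤ d_G(x,y) ≤ h(x) + h(y) − 2k + d_G(x_k,y_k). -/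
open SimpleGraph

variable {V : Type*}

lemma getVert_mem_support' {G : SimpleGraph V} {u v : V} (w : G.Walk u v) (i : ℕ) :
    w.getVert i ∈ w.support := by
  induction w generalizing i with
  | nil => simp [SimpleGraph.Walk.getVert]
  | cons h q ih =>
    cases i with
    | zero => simp [SimpleGraph.Walk.getVert]
    | succ j => simp only [SimpleGraph.Walk.getVert_cons_succ,
        SimpleGraph.Walk.support_cons, List.mem_cons]; exact Or.inr (ih j)

lemma getVert_mapLe' {G G' : SimpleGraph V} (h : G ≤ G') {u v : V} (w : G.Walk u v) (i : ℕ) :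
    (w.mapLe h).getVert i = w.getVert i := by
  induction w generalizing i with
  | nil => rfl
  | cons ha q ih =>
    cases i with
    | zero => simp [SimpleGraph.Walk.getVert]
    | succ j => simpa using ih j

lemma dist_start_getVert_le' {G : SimpleGraph V} (hc : G.Connected) {u v : V}
    (w : G.Walk u v) (i : ℕ) : G.dist u (w.getVert i) ≤ i := by
  induction w generalizing i with
  | nil => simp [SimpleGraph.Walk.getVert, SimpleGraph.dist_self]
  | cons ha q ih =>
    cases i with
    | zero => simp [SimpleGraph.Walk.getVert, SimpleGraph.dist_self]
    | succ j =>
      rw [SimpleGraph.Walk.getVert_cons_succ]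
      calc G.dist _ _ ≤ G.dist _ _ + G.dist _ (q.getVert j) := hc.dist_triangle
        _ ≤ 1 + j := by
            gcongr
            · exact SimpleGraph.dist_le (SimpleGraph.Walk.cons ha SimpleGraph.Walk.nil)
            · exact ih j
        _ = j + 1 := by omega

lemma dist_getVert_end_le' {G : SimpleGraph V} {u v : V} (w : G.Walk u v) (i : ℕ) :
    G.dist (w.getVert i) v ≤ w.length - i := by
  induction w generalizing i with
  | nil => simp [SimpleGraph.Walk.getVert, SimpleGraph.dist_self]
  | cons ha q ih =>
    cases i with
    | zero =>
      simpa [SimpleGraph.Walk.getVert] using SimpleGraph.dist_le (SimpleGraph.Walk.cons ha q)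
    | succ j =>
      rw [SimpleGraph.Walk.getVert_cons_succ]
      simpa using ih j


/-- Let `T` be a `BFS(s)`-tree of `G` (a spanning tree with
`d_T(s,·) = d_G(s,·)`), and for each vertex `z` let `p z` be the (unique) tree
path of `T` from `s` to `z`, so that `(p z).getVert i` is the vertex `z_i` at
distance `i` from `s` on this path.  If `k = sl_T(x,y;δ)` is the largest index
`i ≤ min(h(x),h(y))` with `d_G(x_i,y_i) ≤ δ`, then
`h(x) + h(y) - 2k - 1 ≤ d_G(x,y) ≤ h(x) + h(y) - 2k + d_G(x_k,y_k)`. -/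
theorem stmt_13 [Fintype V] (G : SimpleGraph V) (hG : G.Connected)
    (δ : ℝ) (hδ : 0 ≤ δ) (hthin : ThinTriangles G δ)
    (s : V) (T : SimpleGraph V) (hTG : T ≤ G) (hT : T.IsTree)
    (hbfs : ∀ z : V, T.dist s z = G.dist s z)
    (p : ∀ z : V, T.Walk s z) (hp : ∀ z : V, (p z).IsPath)
    (x y : V) (k : ℕ)
    (hk₁ : k ≤ min (G.dist s x) (G.dist s y))
    (hk₂ : (G.dist ((p x).getVert k) ((p y).getVert k) : ℝ) ≤ δ)
    (hk₃ : ∀ i : ℕ, i ≤ min (G.dist s x) (G.dist s y) →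
      (G.dist ((p x).getVert i) ((p y).getVert i) : ℝ) ≤ δ → i ≤ k) :
    (G.dist s x : ℝ) + (G.dist s y : ℝ) - 2 * (k : ℝ) - 1 ≤ (G.dist x y : ℝ) ∧
    (G.dist x y : ℝ) ≤ (G.dist s x : ℝ) + (G.dist s y : ℝ) - 2 * (k : ℝ)
      + (G.dist ((p x).getVert k) ((p y).getVert k) : ℝ) := by
  classical
  have plen : ∀ z : V, (p z).length = G.dist s z := by
    intro z
    have hr : T.Reachable s z := hT.isConnected.preconnected s z
    obtain ⟨w, hw⟩ := hr.exists_walk_length_eq_dist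
    have huniq : (⟨p z, hp z⟩ : T.Path s z) = w.toPath :=
      hT.IsAcyclic.path_unique _ _
    have h1 : (p z).length = (w.toPath : T.Walk s z).length :=
      congrArg (fun q : T.Path s z => (q : T.Walk s z).length) huniq
    have h2 : (w.toPath : T.Walk s z).length ≤ w.length :=
      SimpleGraph.Walk.length_bypass_le w
    have h3 : T.dist s z ≤ (p z).length := SimpleGraph.dist_le _
    rw [← hbfs z]
    omega
  set Wx : G.Walk s x := (p x).mapLe hTG with hWx
  set Wy : G.Walk s y := (p y).mapLe hTG with hWy
  have hWxlen : Wx.length = G.dist s x := by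
    rw [hWx]; simpa using plen x
  have hWylen : Wy.length = G.dist s y := by
    rw [hWy]; simpa using plen y
  -- distance to getVert on a geodesic
  have hgv : ∀ (z : V) (W : G.Walk s z), W.length = G.dist s z → ∀ i ≤ G.dist s z,
      G.dist s (W.getVert i) = i := by
    intro z W hL i hi
    have le1 := dist_start_getVert_le' hG W i
    have le2 := dist_getVert_end_le' W i
    have tri : G.dist s z ≤ G.dist s (W.getVert i) + G.dist (W.getVert i) z :=
      hG.dist_triangle
    omega
  have hcsx : G.dist x s = G.dist s x := SimpleGraph.dist_comm
  have htri1 : G.dist x y ≤ G.dist x s + G.dist s y := hG.dist_triangle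
  have htri2 : G.dist s x ≤ G.dist s y + G.dist y x := hG.dist_triangle
  have htri3 : G.dist s y ≤ G.dist s x + G.dist x y := hG.dist_triangle
  have hcyx : G.dist y x = G.dist x y := SimpleGraph.dist_comm
  constructor
  · -- lower bound
    set i := (G.dist s x + G.dist s y - G.dist x y) / 2 with hi
    have him : i ≤ min (G.dist s x) (G.dist s y) := by omega
    have hdx : G.dist s (Wx.getVert i) = i := hgv x Wx hWxlen i (by omega)
    have hdy : G.dist s (Wy.getVert i) = i := hgv y Wy hWylen i (by omega)
    have hthini : (G.dist (Wx.getVert i) (Wy.getVert i) : ℝ) ≤ δ := by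
      refine hthin s x y Wx Wy hWxlen hWylen _ (getVert_mem_support' _ _) _
        (getVert_mem_support' _ _) (hdx.trans hdy.symm) ?_
      rw [hdx]; omega
    rw [hWx, hWy, getVert_mapLe', getVert_mapLe'] at hthini
    have hik : i ≤ k := hk₃ i him hthini
    have hnat : G.dist s x + G.dist s y ≤ G.dist x y + 2 * k + 1 := by omega
    have : (G.dist s x + G.dist s y : ℝ) ≤ (G.dist x y : ℝ) + 2 * k + 1 := by
      exact_mod_cast hnat
    linarith
  · -- upper bound
    have h1 : G.dist (Wx.getVert k) x ≤ G.dist s x - k := by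
      have := dist_getVert_end_le' Wx k; omega
    have h2 : G.dist (Wy.getVert k) y ≤ G.dist s y - k := by
      have := dist_getVert_end_le' Wy k; omega
    have tri1 : G.dist x y ≤ G.dist x (Wx.getVert k) + G.dist (Wx.getVert k) y :=
      hG.dist_triangle
    have tri2 : G.dist (Wx.getVert k) y ≤
        G.dist (Wx.getVert k) (Wy.getVert k) + G.dist (Wy.getVert k) y :=
      hG.dist_triangle
    have hc1 : G.dist x (Wx.getVert k) = G.dist (Wx.getVert k) x := SimpleGraph.dist_comm
    have hgk : G.dist (Wx.getVert k) (Wy.getVert k)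
        = G.dist ((p x).getVert k) ((p y).getVert k) := by
      rw [hWx, hWy, getVert_mapLe', getVert_mapLe']
    have hnat : G.dist x y + 2 * k ≤ G.dist s x + G.dist s y
        + G.dist ((p x).getVert k) ((p y).getVert k) := by omega
    have : (G.dist x y : ℝ) + 2 * k ≤ (G.dist s x : ℝ) + G.dist s y
        + G.dist ((p x).getVert k) ((p y).getVert k) := by exact_mod_cast hnat
    linarith
end

section
/- Let G be a finite connected graph with δ-thin triangles, let s be any vertex and T a BFS(s)-tree of G. For all vertices x and y of G, the estimate d̂(x,y) := h(x) + h(y) − 2·sl_T(x,y;δ) + δ satisfies d_G(x,y) ≤ d̂(x,y) ≤ d_G(x,y) + δ + 1. -/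
open SimpleGraph

variable {V : Type*}

/-
The tree paths `s → x` and `s → y` of a BFS tree are geodesics of `G`. Going from `x` down to
`x_k`, across to `y_k` and up to `y` gives `d(x,y) ≤ h(x) + h(y) - 2k + δ`. Conversely, thin
triangles applied to the geodesic triangle `s, x, y` show that `d(x_j, y_j) ≤ δ` at
`j = ⌊(h(x) + h(y) - d(x,y)) / 2⌋ ≤ (x|y)_s`, so `k ≥ j` by maximality of `k`; the rounding in `j`
costs the `+ 1`.
-/

namespace SimpleGraph

variable {G : SimpleGraph V} {s u v x y : V}

lemma IsAcyclic.length_eq_dist_of_isPath (hG : G.IsAcyclic) {p : G.Walk u v} (hp : p.IsPath) :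
    p.length = G.dist u v := by
  obtain ⟨q, hq, hq_len⟩ := p.reachable.exists_path_of_dist
  obtain rfl : p = q := congrArg Subtype.val ((hG.subsingleton_path u v).elim ⟨p, hp⟩ ⟨q, hq⟩)
  exact hq_len

namespace Walk

lemma getVert_mapLe {H : SimpleGraph V} (h : G ≤ H) (p : G.Walk u v) (i : ℕ) :
    (p.mapLe h).getVert i = p.getVert i :=
  getVert_map _ _ _

lemma dist_getVert_left_of_length_eq_dist {q : G.Walk u v} (hq : q.length = G.dist u v)
    (i : ℕ) : G.dist u (q.getVert i) = min i q.length := by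
  rw [← length_eq_dist_of_subwalk hq (isSubwalk_take q i), take_length]

lemma dist_le_length_sub_add_dist_getVert_add (p : G.Walk s x) (q : G.Walk s y) (i : ℕ) :
    G.dist x y ≤ (p.length - i) + G.dist (p.getVert i) (q.getVert i) + (q.length - i) := by
  obtain ⟨r, hr⟩ := ((p.take i).reverse.append (q.take i)).reachable.exists_walk_length_eq_dist
  have := dist_le ((p.drop i).reverse.append (r.append (q.drop i)))
  simp only [length_append, length_reverse, drop_length, hr] at this
  omega

end Walk

lemma ThinTriangles.add_dist_le {δ : ℝ} (hthin : ThinTriangles G δ) {p : G.Walk s x}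
    {q : G.Walk s y} (hp : p.length = G.dist s x) (hq : q.length = G.dist s y) {k : ℕ}
    (hk : ∀ i ≤ min (G.dist s x) (G.dist s y),
      (G.dist (p.getVert i) (q.getVert i) : ℝ) ≤ δ → i ≤ k) :
    G.dist s x + G.dist s y ≤ 2 * k + G.dist x y + 1 := by
  have hsy := p.reachable.dist_triangle_left y
  have hsx := q.reachable.dist_triangle_left x
  have hxy := p.reachable.symm.dist_triangle_left y
  rw [dist_comm (u := y) (v := x)] at hsx
  rw [dist_comm (u := x) (v := s)] at hxy
  set j := (G.dist s x + G.dist s y - G.dist x y) / 2 with hj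
  have hj_min : j ≤ min (G.dist s x) (G.dist s y) := by omega
  have hpj : G.dist s (p.getVert j) = j := by
    rw [Walk.dist_getVert_left_of_length_eq_dist hp]; omega
  have hqj : G.dist s (q.getVert j) = j := by
    rw [Walk.dist_getVert_left_of_length_eq_dist hq]; omega
  have hthin_j := hthin s x y p q hp hq _ (p.getVert_mem_support j) _ (q.getVert_mem_support j)
    (hpj.trans hqj.symm) (by omega)
  have := hk j hj_min hthin_j
  omega

end SimpleGraph

theorem stmt_14_general (G : SimpleGraph V)
    (δ : ℝ) (hthin : ThinTriangles G δ)
    (s : V) (T : SimpleGraph V) (hTG : T ≤ G) (hT : T.IsTree)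
    (hbfs : ∀ z : V, T.dist s z = G.dist s z)
    (p : ∀ z : V, T.Walk s z) (hp : ∀ z : V, (p z).IsPath)
    (x y : V) (k : ℕ)
    (hk₁ : k ≤ min (G.dist s x) (G.dist s y))
    (hk₂ : (G.dist ((p x).getVert k) ((p y).getVert k) : ℝ) ≤ δ)
    (hk₃ : ∀ i : ℕ, i ≤ min (G.dist s x) (G.dist s y) →
      (G.dist ((p x).getVert i) ((p y).getVert i) : ℝ) ≤ δ → i ≤ k) :
    (G.dist x y : ℝ) ≤ (G.dist s x : ℝ) + (G.dist s y : ℝ) - 2 * (k : ℝ) + δ ∧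
    (G.dist s x : ℝ) + (G.dist s y : ℝ) - 2 * (k : ℝ) + δ
      ≤ (G.dist x y : ℝ) + δ + 1 := by
  have hgeod (z : V) : ((p z).mapLe hTG).length = G.dist s z := by
    rw [Walk.length_mapLe, hT.isAcyclic.length_eq_dist_of_isPath (hp z), hbfs]
  have upper := Walk.dist_le_length_sub_add_dist_getVert_add ((p x).mapLe hTG) ((p y).mapLe hTG) k
  have lower := hthin.add_dist_le (hgeod x) (hgeod y) (k := k)
    (by simpa only [Walk.getVert_mapLe] using hk₃)
  simp only [hgeod, Walk.getVert_mapLe] at upper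
  have hkx : k ≤ G.dist s x := hk₁.trans (min_le_left _ _)
  have hky : k ≤ G.dist s y := hk₁.trans (min_le_right _ _)
  have upper_real : (G.dist x y : ℝ) ≤ ((G.dist s x - k : ℕ) : ℝ)
      + G.dist ((p x).getVert k) ((p y).getVert k) + ((G.dist s y - k : ℕ) : ℝ) := by
    exact_mod_cast upper
  have lower_real : (G.dist s x : ℝ) + G.dist s y ≤ 2 * k + G.dist x y + 1 := by
    exact_mod_cast lower
  rw [Nat.cast_sub hkx, Nat.cast_sub hky] at upper_real
  constructor <;> linarith

/-- With `T` a `BFS(s)`-tree, `p z` the tree path of `T` from `s`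
to `z` (so `(p z).getVert i = z_i`), and `k = sl_T(x,y;δ)` the largest index
`i ≤ min(h(x),h(y))` with `d_G(x_i,y_i) ≤ δ`, the estimate
`d̂(x,y) = h(x) + h(y) - 2k + δ` satisfies
`d_G(x,y) ≤ d̂(x,y) ≤ d_G(x,y) + δ + 1`. -/
theorem stmt_14 [Fintype V] (G : SimpleGraph V) (hG : G.Connected)
    (δ : ℝ) (hδ : 0 ≤ δ) (hthin : ThinTriangles G δ)
    (s : V) (T : SimpleGraph V) (hTG : T ≤ G) (hT : T.IsTree)
    (hbfs : ∀ z : V, T.dist s z = G.dist s z)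
    (p : ∀ z : V, T.Walk s z) (hp : ∀ z : V, (p z).IsPath)
    (x y : V) (k : ℕ)
    (hk₁ : k ≤ min (G.dist s x) (G.dist s y))
    (hk₂ : (G.dist ((p x).getVert k) ((p y).getVert k) : ℝ) ≤ δ)
    (hk₃ : ∀ i : ℕ, i ≤ min (G.dist s x) (G.dist s y) →
      (G.dist ((p x).getVert i) ((p y).getVert i) : ℝ) ≤ δ → i ≤ k) :
    (G.dist x y : ℝ) ≤ (G.dist s x : ℝ) + (G.dist s y : ℝ) - 2 * (k : ℝ) + δ ∧
    (G.dist s x : ℝ) + (G.dist s y : ℝ) - 2 * (k : ℝ) + δ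
      ≤ (G.dist x y : ℝ) + δ + 1 :=
  stmt_14_general G δ hthin s T hTG hT hbfs p hp x y k hk₁ hk₂ hk₃
end

section
/- Let G be a finite connected graph with δ-thin triangles, let s be any vertex and T a BFS(s)-tree of G. Let d̃ : V×V → ℕ be any function with d_G(x,y) ≤ d̃(x,y) ≤ 2·d_G(x,y) + 1 for all vertices x,y, and let ρ be any integer with ρ ≥ δ. For all vertices x and y of G, with k = the largest index i ≤ min(h(x),h(y)) such that d̃(x_i,y_i) ≤ 2ρ + 1, the estimate d̂(x,y) := h(x) + h(y) − 2k + 2ρ + 1 satisfies d_G(x,y) ≤ d̂(x,y) ≤ d_G(x,y) + 2ρ + 2. -/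
open SimpleGraph

variable {V : Type*}

lemma my_getVert_map {W : Type*} {G : SimpleGraph V} {G' : SimpleGraph W} (f : G →g G')
    {a b : V} (w : G.Walk a b) (i : ℕ) : (w.map f).getVert i = f (w.getVert i) := by
  induction w generalizing i with
  | nil => rfl
  | cons h q ih =>
    cases i with
    | zero => rfl
    | succ n => simpa [Walk.getVert_cons_succ] using ih n

lemma my_exists_walk_to_getVert {G : SimpleGraph V} {a b : V} (w : G.Walk a b) (i : ℕ) :
    ∃ q : G.Walk a (w.getVert i), q.length ≤ i := by
  induction w generalizing i with
  | nil => exact ⟨Walk.nil, Nat.zero_le _⟩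
  | cons h q ih =>
    cases i with
    | zero => exact ⟨Walk.nil, le_rfl⟩
    | succ n =>
      obtain ⟨r, hr⟩ := ih n
      exact ⟨Walk.cons h r, by simpa using Nat.succ_le_succ hr⟩

lemma my_dist_getVert_left {G : SimpleGraph V} {a b : V} (w : G.Walk a b) (i : ℕ) :
    G.dist a (w.getVert i) ≤ i := by
  obtain ⟨q, hq⟩ := my_exists_walk_to_getVert w i
  exact le_trans (SimpleGraph.dist_le q) hq

lemma my_dist_getVert_right {G : SimpleGraph V} {a b : V} (w : G.Walk a b) {i : ℕ}
    (hi : i ≤ w.length) : G.dist (w.getVert i) b ≤ w.length - i := by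
  obtain ⟨q, hq⟩ := my_exists_walk_to_getVert w.reverse (w.length - i)
  have he : w.reverse.getVert (w.length - i) = w.getVert i := by
    rw [Walk.getVert_reverse, Nat.sub_sub_self hi]
  rw [SimpleGraph.dist_comm]
  calc G.dist b (w.getVert i) = G.dist b (w.reverse.getVert (w.length - i)) := by rw [he]
    _ ≤ q.length := SimpleGraph.dist_le q
    _ ≤ w.length - i := hq


/-- With `T` a `BFS(s)`-tree, `p z` the tree path of `T` from `s`
to `z` (so `(p z).getVert i = z_i`), `d̃` a distance estimate with
`d_G ≤ d̃ ≤ 2 d_G + 1`, `ρ ≥ δ` an integer, and `k` the largest index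
`i ≤ min(h(x),h(y))` with `d̃(x_i,y_i) ≤ 2ρ + 1`, the estimate
`d̂(x,y) = h(x) + h(y) - 2k + 2ρ + 1` satisfies
`d_G(x,y) ≤ d̂(x,y) ≤ d_G(x,y) + 2ρ + 2`. -/
theorem stmt_16 [Fintype V] (G : SimpleGraph V) (hG : G.Connected)
    (δ : ℝ) (hδ : 0 ≤ δ) (hthin : ThinTriangles G δ)
    (s : V) (T : SimpleGraph V) (hTG : T ≤ G) (hT : T.IsTree)
    (hbfs : ∀ z : V, T.dist s z = G.dist s z)
    (p : ∀ z : V, T.Walk s z) (hp : ∀ z : V, (p z).IsPath)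
    (dd : V → V → ℕ)
    (hdd₁ : ∀ a b : V, G.dist a b ≤ dd a b)
    (hdd₂ : ∀ a b : V, dd a b ≤ 2 * G.dist a b + 1)
    (ρ : ℤ) (hρ : δ ≤ (ρ : ℝ))
    (x y : V) (k : ℕ)
    (hk₁ : k ≤ min (G.dist s x) (G.dist s y))
    (hk₂ : (dd ((p x).getVert k) ((p y).getVert k) : ℤ) ≤ 2 * ρ + 1)
    (hk₃ : ∀ i : ℕ, i ≤ min (G.dist s x) (G.dist s y) →
      (dd ((p x).getVert i) ((p y).getVert i) : ℤ) ≤ 2 * ρ + 1 → i ≤ k) :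
    (G.dist x y : ℝ) ≤ (G.dist s x : ℝ) + (G.dist s y : ℝ) - 2 * (k : ℝ)
      + 2 * (ρ : ℝ) + 1 ∧
    (G.dist s x : ℝ) + (G.dist s y : ℝ) - 2 * (k : ℝ) + 2 * (ρ : ℝ) + 1
      ≤ (G.dist x y : ℝ) + 2 * (ρ : ℝ) + 2 := by
  classical
  have hTconn : T.Connected := hT.isConnected
  -- tree paths are shortest paths
  have hlen : ∀ z : V, (p z).length = G.dist s z := by
    intro z
    have h1 : T.dist s z ≤ (p z).length := SimpleGraph.dist_le _
    obtain ⟨q, hq⟩ := hTconn.exists_walk_length_eq_dist s z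
    have h2 : p z = q.bypass := (hT.existsUnique_path s z).unique (hp z) q.bypass_isPath
    have h3 : (p z).length ≤ T.dist s z := by
      rw [h2, ← hq]; exact q.length_bypass_le
    rw [← hbfs z]; exact le_antisymm h3 h1
  have hgve : ∀ (z : V) (j : ℕ), ((p z).mapLe hTG).getVert j = (p z).getVert j :=
    fun z j => my_getVert_map _ _ j
  have hlw : ∀ z : V, ((p z).mapLe hTG).length = G.dist s z := by
    intro z; rw [Walk.length_map]; exact hlen z
  have hgv : ∀ (z : V) (i : ℕ), i ≤ G.dist s z →
      G.dist s ((p z).getVert i) = i ∧ G.dist ((p z).getVert i) z + i ≤ G.dist s z := by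
    intro z i hi
    have hA : G.dist s ((p z).getVert i) ≤ i := by
      rw [← hgve z i]; exact my_dist_getVert_left _ i
    have hB : G.dist ((p z).getVert i) z ≤ G.dist s z - i := by
      rw [← hgve z i]
      have := my_dist_getVert_right ((p z).mapLe hTG) (i := i) (by rw [hlw z]; exact hi)
      rwa [hlw z] at this
    have htr := hG.dist_triangle (u := s) (v := (p z).getVert i) (w := z)
    omega
  set hx := G.dist s x with hhx
  set hy := G.dist s y with hhy
  set d := G.dist x y with hhd
  have hkx : k ≤ hx := by omega
  have hky : k ≤ hy := by omega
  -- first inequality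
  have t1 : d ≤ G.dist x ((p x).getVert k) + G.dist ((p x).getVert k) y := hG.dist_triangle
  have t2 : G.dist ((p x).getVert k) y ≤
      G.dist ((p x).getVert k) ((p y).getVert k) + G.dist ((p y).getVert k) y :=
    hG.dist_triangle
  have e1 : G.dist x ((p x).getVert k) = G.dist ((p x).getVert k) x := SimpleGraph.dist_comm ..
  have n2 : G.dist ((p x).getVert k) x + k ≤ hx := (hgv x k hkx).2
  have n3 : G.dist ((p y).getVert k) y + k ≤ hy := (hgv y k hky).2
  have n4 : (G.dist ((p x).getVert k) ((p y).getVert k) : ℤ) ≤ 2 * ρ + 1 := by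
    have := hdd₁ ((p x).getVert k) ((p y).getVert k)
    omega
  have key1 : (d : ℤ) ≤ (hx : ℤ) + (hy : ℤ) - 2 * (k : ℤ) + 2 * ρ + 1 := by omega
  -- second inequality
  have hd1 : d ≤ hx + hy := by
    have := hG.dist_triangle (u := x) (v := s) (w := y)
    have e : G.dist x s = hx := SimpleGraph.dist_comm ..
    omega
  have hd2 : hy ≤ hx + d := hG.dist_triangle
  have hd3 : hx ≤ hy + d := by
    have := hG.dist_triangle (u := s) (v := y) (w := x)
    have e : G.dist y x = d := SimpleGraph.dist_comm ..
    omega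
  obtain ⟨m, hm1, hm2, hmx, hmy⟩ :
      ∃ m, 2 * m + d ≤ hx + hy ∧ hx + hy ≤ 2 * m + d + 1 ∧ m ≤ hx ∧ m ≤ hy :=
    ⟨(hx + hy - d) / 2, by omega, by omega, by omega, by omega⟩
  have hdx : G.dist s ((p x).getVert m) = m := (hgv x m hmx).1
  have hdy : G.dist s ((p y).getVert m) = m := (hgv y m hmy).1
  have hmemx : (p x).getVert m ∈ ((p x).mapLe hTG).support :=
    Walk.mem_support_iff_exists_getVert.2 ⟨m, hgve x m, by rw [hlw x]; exact hmx⟩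
  have hmemy : (p y).getVert m ∈ ((p y).mapLe hTG).support :=
    Walk.mem_support_iff_exists_getVert.2 ⟨m, hgve y m, by rw [hlw y]; exact hmy⟩
  have hthin' : (G.dist ((p x).getVert m) ((p y).getVert m) : ℝ) ≤ δ := by
    refine hthin s x y ((p x).mapLe hTG) ((p y).mapLe hTG) (hlw x) (hlw y)
      _ hmemx _ hmemy (by rw [hdx, hdy]) ?_
    rw [hdx]; exact hm1
  have hρ' : (G.dist ((p x).getVert m) ((p y).getVert m) : ℤ) ≤ ρ := by
    exact_mod_cast hthin'.trans hρ
  have hddm : (dd ((p x).getVert m) ((p y).getVert m) : ℤ) ≤ 2 * ρ + 1 := by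
    have := hdd₂ ((p x).getVert m) ((p y).getVert m)
    omega
  have hmk : m ≤ k := hk₃ m (by omega) hddm
  have key2 : (hx : ℤ) + (hy : ℤ) - 2 * (k : ℤ) + 2 * ρ + 1 ≤ (d : ℤ) + 2 * ρ + 2 := by omega
  constructor
  · exact_mod_cast key1
  · exact_mod_cast key2
end
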